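/- arXiv:2407.10146 — 11 statements merged into one kernel-verified Lean document; each statement's English description precedes it below -/
import Mathlib

section
/- Let Π be an R-CSP instance and let I(Π) be the knapsack instance produced by the simple reduction. If φ is a consistent partial assignment for Π, then the set S = {(v, φ(v)) : v ∈ V(G), φ(v) ≠ ⊥} is a solution (feasible set) for I(Π) whose profit equals the size |φ| of φ. -/
/-- An R-CSP instance: a finite simple directed graph (irreflexive and antisymmetric edge
set `E ⊆ V × V`), an alphabet `S`, a value alphabet `Υ = {1,…,m}` with `m > 0`, and for
each edge `e = (u,v) ∈ E` two maps `π_{e,u}, π_{e,v} : S → {1,…,m}` (called `pifst e` and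
`pisnd e` respectively). -/
structure RCSP (V S : Type) [Fintype V] [DecidableEq V] [Fintype S] [DecidableEq S] where
  E : Finset (V × V)
  ne_of_mem : ∀ e ∈ E, e.1 ≠ e.2
  antisymm : ∀ u v : V, (u, v) ∈ E → (v, u) ∉ E
  m : ℕ
  m_pos : 0 < m
  pifst : V × V → S → ℕ
  pisnd : V × V → S → ℕ
  pifst_pos : ∀ e ∈ E, ∀ σ : S, 1 ≤ pifst e σ
  pifst_le : ∀ e ∈ E, ∀ σ : S, pifst e σ ≤ m
  pisnd_pos : ∀ e ∈ E, ∀ σ : S, 1 ≤ pisnd e σ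
  pisnd_le : ∀ e ∈ E, ∀ σ : S, pisnd e σ ≤ m

namespace RCSP

variable {V S : Type} [Fintype V] [DecidableEq V] [Fintype S] [DecidableEq S]

/-- A partial assignment `φ : V → S ∪ {⊥}` is consistent if for every edge `e = (u,v)`
with both endpoints assigned, `π_{e,u}(φ u) = π_{e,v}(φ v)`. -/
def Consistent (P : RCSP V S) (φ : V → Option S) : Prop :=
  ∀ e ∈ P.E, ∀ a b : S, φ e.1 = some a → φ e.2 = some b → P.pifst e a = P.pisnd e b

/-- The size of a partial assignment: the number of vertices assigned a value. -/
def size (φ : V → Option S) : ℕ := (Finset.univ.filter fun v : V => (φ v).isSome).card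

/-- The cost function of the simple reduction.  Dimensions are indexed by
`V ⊕ ((V × V) × Bool)`: `Sum.inl v` is the vertex dimension of `v`; for an edge
`e = (u,v) ∈ E`, `Sum.inr (e, false)` is the `(e,u)`-dimension and `Sum.inr (e, true)`
the `(e,v)`-dimension (dimensions `Sum.inr (e, _)` with `e ∉ E` carry zero costs).
Items are pairs `(v, σ) ∈ V × S`. -/
def w (P : RCSP V S) : V ⊕ ((V × V) × Bool) → V × S → ℕ
  | Sum.inl u, (v, _) => if v = u then P.m else 0
  | Sum.inr (e, false), (v, σ) =>
      if e ∈ P.E then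
        if v = e.1 then P.pifst e σ else if v = e.2 then P.m - P.pisnd e σ else 0
      else 0
  | Sum.inr (e, true), (v, σ) =>
      if e ∈ P.E then
        if v = e.1 then P.m - P.pifst e σ else if v = e.2 then P.pisnd e σ else 0
      else 0

/-- A solution (feasible set) of the knapsack instance `I(Π)` produced by the simple
reduction: all budgets equal `m`. -/
def IsSolution (P : RCSP V S) (Sol : Finset (V × S)) : Prop :=
  ∀ j : V ⊕ ((V × V) × Bool), ∑ i ∈ Sol, P.w j i ≤ P.m

end RCSP


lemma sum_filter_some {V S : Type} [Fintype V] [DecidableEq V] [Fintype S] [DecidableEq S]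
    (φ : V → Option S) (f : V × S → ℕ) :
    ∑ i ∈ (Finset.univ.filter fun i : V × S => φ i.1 = some i.2), f i =
      ∑ v : V, (φ v).elim 0 (fun σ => f (v, σ)) := by
  rw [Finset.sum_filter, Fintype.sum_prod_type]
  refine Finset.sum_congr rfl fun v _ => ?_
  cases h : φ v with
  | none => simp [h]
  | some a =>
    simp only [h, Option.some_inj, Option.elim]
    rw [Finset.sum_ite_eq Finset.univ a (fun σ => f (v, σ))]
    simp

/-- If `φ` is a consistent partial assignment for the R-CSP instance `Π`,
then `S = {(v, φ v) : φ v ≠ ⊥}` is a solution of the knapsack instance `I(Π)` produced by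
the simple reduction, and its profit (all items have unit profit) equals the size of `φ`. -/
theorem simple_reduction_of_consistent
    {V S : Type} [Fintype V] [DecidableEq V] [Fintype S] [DecidableEq S]
    (P : RCSP V S) (φ : V → Option S) (hφ : P.Consistent φ) :
    P.IsSolution (Finset.univ.filter fun i : V × S => φ i.1 = some i.2) ∧
      (Finset.univ.filter fun i : V × S => φ i.1 = some i.2).card = RCSP.size φ := by
  constructor
  · intro j
    rw [sum_filter_some]
    cases j with
    | inl u =>
      calc ∑ v : V, (φ v).elim 0 (fun σ => P.w (Sum.inl u) (v, σ))
          ≤ ∑ v : V, (if v = u then P.m else 0) := by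
            refine Finset.sum_le_sum fun v _ => ?_
            cases h : φ v with
            | none => simp
            | some a => simp [RCSP.w]
        _ = P.m := by simp
    | inr eb =>
      obtain ⟨e, b⟩ := eb
      by_cases he : e ∈ P.E
      · have hne : e.1 ≠ e.2 := P.ne_of_mem e he
        have hzero : ∀ v ∈ Finset.univ, v ∉ ({e.1, e.2} : Finset V) →
            (φ v).elim 0 (fun σ => P.w (Sum.inr (e, b)) (v, σ)) = 0 := by
          intro v _ hv
          simp only [Finset.mem_insert, Finset.mem_singleton, not_or] at hv
          cases h : φ v with
          | none => simp
          | some a => cases b <;> simp [RCSP.w, hv.1, hv.2]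
        rw [← Finset.sum_subset (Finset.subset_univ ({e.1, e.2} : Finset V)) hzero,
          Finset.sum_insert (by simpa using hne), Finset.sum_singleton]
        cases b
        · -- dimension (e, u) : pifst at e.1, m - pisnd at e.2
          cases h1 : φ e.1 with
          | none =>
            simp only [Option.elim]
            cases h2 : φ e.2 with
            | none => simp [P.m_pos.le]
            | some b2 =>
              simp [RCSP.w, he, hne.symm, Nat.sub_le]
          | some a1 =>
            cases h2 : φ e.2 with
            | none =>
              simp only [Option.elim]
              simpa [RCSP.w, he, hne] using P.pifst_le e he a1
            | some b2 =>
              have hcons := hφ e he a1 b2 h1 h2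
              simp only [Option.elim, RCSP.w, he, if_true, if_pos rfl, if_neg hne.symm,
                if_neg hne]
              have := P.pisnd_le e he b2
              omega
        · cases h1 : φ e.1 with
          | none =>
            simp only [Option.elim]
            cases h2 : φ e.2 with
            | none => simp [P.m_pos.le]
            | some b2 =>
              simpa [RCSP.w, he, hne.symm] using P.pisnd_le e he b2
          | some a1 =>
            cases h2 : φ e.2 with
            | none =>
              simp only [Option.elim]
              simp [RCSP.w, he, hne, Nat.sub_le]
            | some b2 =>
              have hcons := hφ e he a1 b2 h1 h2
              simp only [Option.elim, RCSP.w, he, if_true, if_pos rfl, if_neg hne.symm,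
                if_neg hne]
              have := P.pifst_le e he a1
              omega
      · have : ∀ v ∈ Finset.univ, (φ v).elim 0 (fun σ => P.w (Sum.inr (e, b)) (v, σ)) = 0 := by
          intro v _
          cases h : φ v with
          | none => simp
          | some a => cases b <;> simp [RCSP.w, he]
        rw [Finset.sum_congr rfl this]
        simp [P.m_pos.le]
  · have := sum_filter_some φ (fun _ : V × S => 1)
    rw [Finset.sum_const, smul_eq_mul, mul_one] at this
    rw [this, RCSP.size, Finset.card_filter]
    refine Finset.sum_congr rfl fun v _ => ?_
    cases h : φ v <;> simp [h]
end

section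
/- Let Π be an R-CSP instance and let I(Π) be the knapsack instance produced by the simple reduction. If S ⊆ V(G) × Σ is a solution for I(Π), then for every vertex v ∈ V(G) there is at most one σ ∈ Σ with (v,σ) ∈ S, and the partial assignment φ that assigns to each such v this unique σ (and ⊥ to all other vertices) is a consistent partial assignment for Π of size |φ| = |S| = p(S). -/
/-- If `Sol ⊆ V × S` is a solution of the knapsack instance `I(Π)`
produced by the simple reduction, then every vertex `v` has at most one `σ` with
`(v,σ) ∈ Sol`, and the partial assignment `φ` assigning to each such `v` this unique `σ`
(and `⊥` elsewhere) is a consistent partial assignment for `Π` of size `|φ| = |Sol| = p(Sol)`. -/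
theorem simple_reduction_soundness
    {V S : Type} [Fintype V] [DecidableEq V] [Fintype S] [DecidableEq S]
    (P : RCSP V S) (Sol : Finset (V × S)) (hSol : P.IsSolution Sol) :
    (∀ v : V, ∀ σ σ' : S, (v, σ) ∈ Sol → (v, σ') ∈ Sol → σ = σ') ∧
      ∃ φ : V → Option S,
        (∀ (v : V) (σ : S), φ v = some σ ↔ (v, σ) ∈ Sol) ∧
        P.Consistent φ ∧ RCSP.size φ = Sol.card := by
  have hpair : ∀ (j : V ⊕ ((V × V) × Bool)) (i₁ i₂ : V × S), i₁ ∈ Sol → i₂ ∈ Sol →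
      i₁ ≠ i₂ → P.w j i₁ + P.w j i₂ ≤ P.m := by
    intro j i₁ i₂ h₁ h₂ hne
    have hsub : ({i₁, i₂} : Finset (V × S)) ⊆ Sol := by
      intro x hx
      simp only [Finset.mem_insert, Finset.mem_singleton] at hx
      rcases hx with rfl | rfl <;> assumption
    calc P.w j i₁ + P.w j i₂ = ∑ i ∈ ({i₁, i₂} : Finset (V × S)), P.w j i :=
          (Finset.sum_pair hne).symm
      _ ≤ ∑ i ∈ Sol, P.w j i := Finset.sum_le_sum_of_subset hsub
      _ ≤ P.m := hSol j
  have huniq : ∀ v : V, ∀ σ σ' : S, (v, σ) ∈ Sol → (v, σ') ∈ Sol → σ = σ' := by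
    intro v σ σ' h h'
    by_contra hne
    have hne' : (v, σ) ≠ (v, σ') := by simp [hne]
    have := hpair (Sum.inl v) (v, σ) (v, σ') h h' hne'
    simp [RCSP.w] at this
    have := P.m_pos
    omega
  refine ⟨huniq, ?_⟩
  classical
  set φ : V → Option S := fun v =>
    if h : ∃ σ, (v, σ) ∈ Sol then some h.choose else none with hφdef
  have hφ : ∀ (v : V) (σ : S), φ v = some σ ↔ (v, σ) ∈ Sol := by
    intro v σ
    constructor
    · intro h
      by_cases hex : ∃ σ, (v, σ) ∈ Sol
      · have := hex.choose_spec
        simp only [hφdef, dif_pos hex] at h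
        rwa [Option.some_inj.mp h] at this
      · simp only [hφdef, dif_neg hex] at h
        exact absurd h (by simp)
    · intro h
      have hex : ∃ σ, (v, σ) ∈ Sol := ⟨σ, h⟩
      simp only [hφdef, dif_pos hex]
      exact congrArg some (huniq v _ _ hex.choose_spec h)
  refine ⟨φ, hφ, ?_, ?_⟩
  · intro e he a b ha hb
    have ha' : (e.1, a) ∈ Sol := (hφ _ _).mp ha
    have hb' : (e.2, b) ∈ Sol := (hφ _ _).mp hb
    have hne12 : e.1 ≠ e.2 := P.ne_of_mem e he
    have hne : (e.1, a) ≠ (e.2, b) := fun h => hne12 (congrArg Prod.fst h)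
    have h1 := hpair (Sum.inr (e, false)) (e.1, a) (e.2, b) ha' hb' hne
    have h2 := hpair (Sum.inr (e, true)) (e.1, a) (e.2, b) ha' hb' hne
    simp [RCSP.w, he, hne12.symm] at h1 h2
    have hle1 := P.pifst_le e he a
    have hle2 := P.pisnd_le e he b
    have hp1 := P.pifst_pos e he a
    have hp2 := P.pisnd_pos e he b
    omega
  · have hinj : Set.InjOn Prod.fst (Sol : Set (V × S)) := by
      intro i₁ h₁ i₂ h₂ h
      have := huniq i₁.1 i₁.2 i₂.2 (by simpa using h₁) (by rw [h]; simpa using h₂)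
      exact Prod.ext h this
    rw [RCSP.size, ← Finset.card_image_of_injOn hinj]
    congr 1
    ext v
    simp only [Finset.mem_filter, Finset.mem_univ, true_and, Finset.mem_image,
      Option.isSome_iff_exists]
    constructor
    · rintro ⟨σ, hσ⟩
      exact ⟨(v, σ), (hφ v σ).mp hσ, rfl⟩
    · rintro ⟨⟨v', σ⟩, hmem, rfl⟩
      exact ⟨σ, (hφ _ _).mpr hmem⟩
end

section
/- Let Π be an R-CSP instance and let I(Π) be the knapsack instance produced by the simple reduction. Then for every q ∈ ℕ: there exists a solution for I(Π) of profit q if and only if there exists a consistent partial assignment for Π of size q. -/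
section Aux

variable {V S : Type} [Fintype V] [DecidableEq V] [Fintype S] [DecidableEq S]

lemma sum_assign (φ : V → Option S) (f : V × S → ℕ) :
    ∑ p ∈ Finset.univ.filter (fun p : V × S => φ p.1 = some p.2), f p
      = ∑ v : V, (φ v).elim 0 (fun σ => f (v, σ)) := by
  rw [Finset.sum_filter, Fintype.sum_prod_type]
  refine Finset.sum_congr rfl fun v _ => ?_
  cases h : φ v with
  | none => simp [h]
  | some τ => simp [h, Finset.sum_ite_eq]

lemma card_filter_eq_size (φ : V → Option S) :
    (Finset.univ.filter (fun p : V × S => φ p.1 = some p.2)).card = RCSP.size φ := by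
  rw [Finset.card_eq_sum_ones, sum_assign, RCSP.size, Finset.card_eq_sum_ones,
    Finset.sum_filter]
  refine Finset.sum_congr rfl fun v _ => ?_
  cases φ v <;> simp

end Aux

/-- For every `q ∈ ℕ`: the knapsack instance `I(Π)` produced by the
simple reduction has a solution of profit `q` (all item profits are `1`, so profit is
cardinality) if and only if `Π` has a consistent partial assignment of size `q`. -/


theorem simple_reduction_iff
    {V S : Type} [Fintype V] [DecidableEq V] [Fintype S] [DecidableEq S]
    (P : RCSP V S) (q : ℕ) :
    (∃ Sol : Finset (V × S), P.IsSolution Sol ∧ Sol.card = q) ↔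
      (∃ φ : V → Option S, P.Consistent φ ∧ RCSP.size φ = q) := by
  classical
  constructor
  · rintro ⟨Sol, hSol, rfl⟩
    -- uniqueness per vertex
    have huniq : ∀ v : V, ∀ σ τ : S, (v, σ) ∈ Sol → (v, τ) ∈ Sol → σ = τ := by
      intro v σ τ hσ hτ
      by_contra hne
      have hsub : ({(v, σ), (v, τ)} : Finset (V × S)) ⊆ Sol := by
        intro p hp
        simp only [Finset.mem_insert, Finset.mem_singleton] at hp
        rcases hp with rfl | rfl <;> assumption
      have h2 : ∑ i ∈ ({(v, σ), (v, τ)} : Finset (V × S)), P.w (Sum.inl v) i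
          ≤ ∑ i ∈ Sol, P.w (Sum.inl v) i :=
        Finset.sum_le_sum_of_subset hsub
      rw [Finset.sum_pair (by simp [hne])] at h2
      have hb := hSol (Sum.inl v)
      simp [RCSP.w] at h2 hb
      have := P.m_pos
      omega
    set φ : V → Option S := fun v =>
      if h : ∃ σ : S, (v, σ) ∈ Sol then some h.choose else none with hφdef
    have hφ : ∀ v σ, φ v = some σ ↔ (v, σ) ∈ Sol := by
      intro v σ
      by_cases hex : ∃ τ : S, (v, τ) ∈ Sol
      · simp only [hφdef, dif_pos hex, Option.some.injEq]
        constructor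
        · rintro rfl; exact hex.choose_spec
        · intro h; exact huniq v _ _ hex.choose_spec h
      · simp only [hφdef, dif_neg hex]
        constructor
        · intro h; exact absurd h (by simp)
        · intro h; exact absurd ⟨σ, h⟩ hex
    have hSolEq : Sol = Finset.univ.filter (fun p : V × S => φ p.1 = some p.2) := by
      ext ⟨v, σ⟩
      simp [hφ v σ]
    refine ⟨φ, ?_, by rw [hSolEq, card_filter_eq_size]⟩
    intro e he a b ha hb
    have hne : e.1 ≠ e.2 := P.ne_of_mem e he
    have h1 : (e.1, a) ∈ Sol := (hφ _ _).mp ha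
    have h2 : (e.2, b) ∈ Sol := (hφ _ _).mp hb
    have hsub : ({(e.1, a), (e.2, b)} : Finset (V × S)) ⊆ Sol := by
      intro p hp
      simp only [Finset.mem_insert, Finset.mem_singleton] at hp
      rcases hp with rfl | rfl <;> assumption
    have key : ∀ bb : Bool,
        ∑ i ∈ ({(e.1, a), (e.2, b)} : Finset (V × S)), P.w (Sum.inr (e, bb)) i ≤ P.m := by
      intro bb
      exact le_trans (Finset.sum_le_sum_of_subset hsub) (hSol (Sum.inr (e, bb)))
    have kf := key false
    have kt := key true
    rw [Finset.sum_pair (by simp [hne])] at kf kt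
    simp [RCSP.w, he, hne.symm] at kf kt
    have hfle := P.pifst_le e he a
    have hsle := P.pisnd_le e he b
    have hfpos := P.pifst_pos e he a
    have hspos := P.pisnd_pos e he b
    omega
  · rintro ⟨φ, hcons, rfl⟩
    refine ⟨Finset.univ.filter (fun p : V × S => φ p.1 = some p.2), ?_,
      card_filter_eq_size φ⟩
    intro j
    rw [sum_assign]
    rcases j with u | ⟨e, bb⟩
    · rw [Finset.sum_eq_single u
        (fun v _ hvu => by cases φ v <;> simp [RCSP.w, hvu]) (by simp)]
      cases φ u <;> simp [RCSP.w]
    · by_cases he : e ∈ P.E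
      · have hne : e.1 ≠ e.2 := P.ne_of_mem e he
        have hzero : ∀ v ∈ Finset.univ, v ∉ ({e.1, e.2} : Finset V) →
            (φ v).elim 0 (fun σ => P.w (Sum.inr (e, bb)) (v, σ)) = 0 := by
          intro v _ hv
          simp only [Finset.mem_insert, Finset.mem_singleton, not_or] at hv
          cases φ v <;> cases bb <;> simp [RCSP.w, hv.1, hv.2, he]
        rw [← Finset.sum_subset (Finset.subset_univ {e.1, e.2}) hzero,
          Finset.sum_pair hne]
        have hfle : ∀ a : S, P.pifst e a ≤ P.m := P.pifst_le e he
        have hsle : ∀ b : S, P.pisnd e b ≤ P.m := P.pisnd_le e he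
        cases ha : φ e.1 with
        | none =>
          cases hb : φ e.2 with
          | none => cases bb <;> simp [RCSP.w]
          | some b =>
            cases bb <;> simp [RCSP.w, he, hne.symm] <;>
              (have := hsle b; omega)
        | some a =>
          cases hb : φ e.2 with
          | none =>
            cases bb <;> simp [RCSP.w, he, hne.symm] <;>
              (have := hfle a; omega)
          | some b =>
            have hab := hcons e he a b ha hb
            have := hsle b
            have := hfle a
            cases bb <;> simp [RCSP.w, he, hne.symm] <;> omega
      · have : ∀ v ∈ Finset.univ,
            (φ v).elim 0 (fun σ => P.w (Sum.inr (e, bb)) (v, σ)) = 0 := by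
          intro v _
          cases φ v <;> cases bb <;> simp [RCSP.w, he]
        rw [Finset.sum_eq_zero this]
        exact Nat.zero_le _
end

section
/- (Completeness of the dimension embedding reduction.) In the setting of the dimension embedding reduction, if Π admits a consistent partial assignment of size |V(G)| (i.e., a consistent assignment φ with φ(v) ≠ ⊥ for all v), then the set S = {(v, φ(v)) : v ∈ V(G)} is a solution for I(Π,F) of profit exactly |V(G)| + 2·|E(G)|; in particular every budget constraint is satisfied with equality. -/
namespace RCSP

variable {V S : Type} [Fintype V] [DecidableEq V] [Fintype S] [DecidableEq S]

/-- The set `Adj_G(v)` of edges incident to the vertex `v`. -/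
def adj (P : RCSP V S) (v : V) : Finset (V × V) :=
  P.E.filter fun e => e.1 = v ∨ e.2 = v

/-- The set of constraints `D = V(G) ∪ E(G)`, as a finset of `V ⊕ (V × V)`. -/
def Dset (P : RCSP V S) : Finset (V ⊕ (V × V)) :=
  Finset.univ.image Sum.inl ∪ P.E.image Sum.inr

/-- The block `D_ℓ` of the partition of `D` determined by the index function `idx`
(assigning to each constraint the index of its block). -/
def Dblock (P : RCSP V S) {r : ℕ} (idx : V ⊕ (V × V) → Fin r) (ℓ : Fin r) :
    Finset (V ⊕ (V × V)) :=
  P.Dset.filter fun j => idx j = ℓ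

/-- `J(ℓ,v)`: the number of constraints in `D_ℓ` in which `v` participates, namely
`|Adj_G(v) ∩ D_ℓ|`, plus one if `v ∈ D_ℓ`. -/
def J (P : RCSP V S) {r : ℕ} (idx : V ⊕ (V × V) → Fin r) (ℓ : Fin r) (v : V) : ℕ :=
  ((P.adj v).filter fun e => idx (Sum.inr e) = ℓ).card +
    if idx (Sum.inl v) = ℓ then 1 else 0

/-- `N_ℓ = Σ_{v ∈ V(G)} J(ℓ,v)`. -/
def N (P : RCSP V S) {r : ℕ} (idx : V ⊕ (V × V) → Fin r) (ℓ : Fin r) : ℕ :=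
  ∑ v : V, P.J idx ℓ v

/-- The profit of a set of items: `p(v,σ) = Σ_{ℓ ∈ [r]} J(ℓ,v)`, summed over the set. -/
def profit (P : RCSP V S) {r : ℕ} (idx : V ⊕ (V × V) → Fin r)
    (Sol : Finset (V × S)) : ℕ :=
  ∑ i ∈ Sol, ∑ ℓ : Fin r, P.J idx ℓ i.1

/-- `Q = 3 · F² · m · |V(G)| · |Σ|`. -/
def Q (P : RCSP V S) (F : ℕ) : ℕ :=
  3 * F ^ 2 * P.m * Fintype.card V * Fintype.card S

/-- `M = Q^{2F}`. -/
def Mbig (P : RCSP V S) (F : ℕ) : ℕ := P.Q F ^ (2 * F)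

/-- The auxiliary weights `w_j(v,σ)` for constraints `j ∈ D`:
`w_v(v,σ) = m`; for an edge `e ∈ E`, `w_e(v,σ) = π_{e,v}(σ)` if `v` is the first endpoint
of `e`, and `w_e(v,σ) = m − π_{e,v}(σ)` if `v` is the second endpoint; all other weights
vanish. -/
def ew (P : RCSP V S) : V ⊕ (V × V) → V × S → ℕ
  | Sum.inl u, (v, _) => if v = u then P.m else 0
  | Sum.inr e, (v, σ) =>
      if e ∈ P.E then
        if e.1 = v then P.pifst e σ else if e.2 = v then P.m - P.pisnd e σ else 0
      else 0

/-- The cost in dimension `(ℓ,1)`: `c_{(ℓ,1)}(i) = Σ_{j ∈ D_ℓ} w_j(i) · Q^{ord_ℓ(j)}`. -/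
def cost1 (P : RCSP V S) (F : ℕ) {r : ℕ} (idx : V ⊕ (V × V) → Fin r)
    (ord : V ⊕ (V × V) → ℕ) (ℓ : Fin r) (i : V × S) : ℕ :=
  ∑ j ∈ P.Dblock idx ℓ, P.ew j i * P.Q F ^ ord j

/-- The cost in dimension `(ℓ,2)`: `c_{(ℓ,2)}(v,σ) = M · J(ℓ,v) − c_{(ℓ,1)}(v,σ)`. -/
def cost2 (P : RCSP V S) (F : ℕ) {r : ℕ} (idx : V ⊕ (V × V) → Fin r)
    (ord : V ⊕ (V × V) → ℕ) (ℓ : Fin r) (i : V × S) : ℕ :=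
  P.Mbig F * P.J idx ℓ i.1 - P.cost1 F idx ord ℓ i

/-- The budget in dimension `(ℓ,1)`: `B_{(ℓ,1)} = Σ_{j ∈ D_ℓ} m · Q^{ord_ℓ(j)}`. -/
def budget1 (P : RCSP V S) (F : ℕ) {r : ℕ} (idx : V ⊕ (V × V) → Fin r)
    (ord : V ⊕ (V × V) → ℕ) (ℓ : Fin r) : ℕ :=
  ∑ j ∈ P.Dblock idx ℓ, P.m * P.Q F ^ ord j

/-- The budget in dimension `(ℓ,2)`: `B_{(ℓ,2)} = M · N_ℓ − B_{(ℓ,1)}`. -/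
def budget2 (P : RCSP V S) (F : ℕ) {r : ℕ} (idx : V ⊕ (V × V) → Fin r)
    (ord : V ⊕ (V × V) → ℕ) (ℓ : Fin r) : ℕ :=
  P.Mbig F * P.N idx ℓ - P.budget1 F idx ord ℓ

/-- A solution of the knapsack instance `I(Π,F)` produced by the dimension embedding
reduction: a set of items respecting the budgets in all `2r` dimensions. -/
def IsEmbedSolution (P : RCSP V S) (F : ℕ) {r : ℕ} (idx : V ⊕ (V × V) → Fin r)
    (ord : V ⊕ (V × V) → ℕ) (Sol : Finset (V × S)) : Prop :=
  (∀ ℓ : Fin r, ∑ i ∈ Sol, P.cost1 F idx ord ℓ i ≤ P.budget1 F idx ord ℓ) ∧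
  (∀ ℓ : Fin r, ∑ i ∈ Sol, P.cost2 F idx ord ℓ i ≤ P.budget2 F idx ord ℓ)

/-- The index `ℓ ∈ [r]` is tight for `Sol` if `Σ_{(v,σ) ∈ Sol} J(ℓ,v) = N_ℓ`. -/
def Tight (P : RCSP V S) {r : ℕ} (idx : V ⊕ (V × V) → Fin r)
    (Sol : Finset (V × S)) (ℓ : Fin r) : Prop :=
  ∑ i ∈ Sol, P.J idx ℓ i.1 = P.N idx ℓ

/-- `v ∈ V*`: every constraint `x ∈ Adj_G(v) ∪ {v}` lies in a tight block, i.e.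
`ℓ(x) ∈ T` where `ℓ(x)` is the index of the block containing `x`. -/
def InVstar (P : RCSP V S) {r : ℕ} (idx : V ⊕ (V × V) → Fin r)
    (Sol : Finset (V × S)) (v : V) : Prop :=
  P.Tight idx Sol (idx (Sum.inl v)) ∧
    ∀ e ∈ P.adj v, P.Tight idx Sol (idx (Sum.inr e))

/-- The hypotheses of the dimension embedding reduction: the constraint graph is
3-regular, `F ∈ [|V(G)|]`, the blocks `D_1,…,D_r` partition `D` (automatic, since `idx`
is a function on `D`) with `|D_ℓ| ≤ F`, and for each `ℓ` the map `ord` restricts to a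
bijection `D_ℓ → {1,…,|D_ℓ|}`. -/
def EmbedSetting (P : RCSP V S) (F : ℕ) {r : ℕ} (idx : V ⊕ (V × V) → Fin r)
    (ord : V ⊕ (V × V) → ℕ) : Prop :=
  (∀ v : V, (P.adj v).card = 3) ∧
  1 ≤ F ∧ F ≤ Fintype.card V ∧
  (∀ ℓ : Fin r, (P.Dblock idx ℓ).card ≤ F) ∧
  (∀ ℓ : Fin r, Set.BijOn ord (P.Dblock idx ℓ : Set (V ⊕ (V × V)))
    (Set.Icc 1 ((P.Dblock idx ℓ).card)))

end RCSP

namespace RCSP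

variable {V S : Type} [Fintype V] [DecidableEq V] [Fintype S] [DecidableEq S]

/-- `j ∈ D` is incident to the vertex `v`. -/
def incF (v : V) (j : V ⊕ (V × V)) : Bool :=
  Sum.elim (fun u => u = v) (fun e => e.1 = v || e.2 = v) j

@[simp] lemma incF_inl (v u : V) : incF v (Sum.inl u) ↔ u = v := by
  simp [incF]

@[simp] lemma incF_inr (v : V) (e : V × V) :
    incF v (Sum.inr e) ↔ e.1 = v ∨ e.2 = v := by
  simp [incF]

lemma J_eq (P : RCSP V S) {r : ℕ} (idx : V ⊕ (V × V) → Fin r) (ℓ : Fin r) (v : V) :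
    P.J idx ℓ v = ((P.Dblock idx ℓ).filter fun j => incF v j).card := by
  classical
  unfold J Dblock Dset
  rw [Finset.filter_union, Finset.filter_union, Finset.filter_image,
    Finset.filter_image, Finset.filter_image, Finset.filter_image,
    Finset.card_union_of_disjoint]
  · rw [Finset.card_image_of_injective _ Sum.inl_injective,
      Finset.card_image_of_injective _ Sum.inr_injective,
      Finset.filter_filter, Finset.filter_filter]
    have h1 : (Finset.univ.filter fun u : V =>
        idx (Sum.inl u) = ℓ ∧ incF v (Sum.inl u)) =
        if idx (Sum.inl v) = ℓ then {v} else ∅ := by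
      ext u
      split_ifs with h <;> simp_all <;> aesop
    have h2 : (P.E.filter fun e => idx (Sum.inr e) = ℓ ∧ incF v (Sum.inr e)) =
        (P.adj v).filter fun e => idx (Sum.inr e) = ℓ := by
      unfold adj
      rw [Finset.filter_filter]
      apply Finset.filter_congr
      intro e _
      simp [and_comm]
    rw [h1, h2]
    split_ifs with h <;> simp [Nat.add_comm]
  · simp only [Finset.disjoint_left]
    intro x hx hy
    simp only [Finset.mem_image, Finset.mem_filter] at hx hy
    obtain ⟨a, -, rfl⟩ := hx
    obtain ⟨b, -, hb⟩ := hy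
    exact Sum.inl_ne_inr hb.symm

lemma ew_le (P : RCSP V S) (j : V ⊕ (V × V)) (i : V × S) : P.ew j i ≤ P.m := by
  obtain ⟨v, σ⟩ := i
  cases j with
  | inl u => simp only [ew]; split <;> simp
  | inr e =>
    simp only [ew]
    split_ifs with h h1 h2 <;>
      first
        | exact P.pifst_le e h σ
        | exact Nat.sub_le _ _
        | exact Nat.zero_le _

lemma ew_eq_zero (P : RCSP V S) (j : V ⊕ (V × V)) (v : V) (σ : S)
    (h : ¬ (incF v j : Prop)) : P.ew j (v, σ) = 0 := by
  cases j with
  | inl u =>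
    simp only [incF_inl] at h
    simp only [ew]
    rw [if_neg (fun hh => h hh.symm)]
  | inr e =>
    simp only [incF_inr, not_or] at h
    simp only [ew]
    split_ifs with h1 h2 h3 <;> first | rfl | exact absurd h2 h.1 | exact absurd h3 h.2

/-- each constraint `j ∈ D` receives total weight exactly `m` from the solution. -/
lemma sum_ew (P : RCSP V S) (φ : V → S)
    (hcons : ∀ e ∈ P.E, P.pifst e (φ e.1) = P.pisnd e (φ e.2))
    (j : V ⊕ (V × V)) (hj : j ∈ P.Dset) :
    ∑ v : V, P.ew j (v, φ v) = P.m := by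
  cases j with
  | inl u =>
    simp only [ew]
    rw [Finset.sum_ite_eq' Finset.univ u fun _ => P.m]
    simp
  | inr e =>
    have he : e ∈ P.E := by
      unfold Dset at hj
      simp only [Finset.mem_union, Finset.mem_image, Finset.mem_univ, true_and] at hj
      rcases hj with ⟨a, ha⟩ | ⟨a, ha, h2⟩
      · exact absurd ha Sum.inl_ne_inr
      · obtain rfl : a = e := Sum.inr_injective h2
        exact ha
    have hne := P.ne_of_mem e he
    have key : ∀ v : V, P.ew (Sum.inr e) (v, φ v) =
        (if v = e.1 then P.pifst e (φ e.1) else 0) +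
        (if v = e.2 then P.m - P.pisnd e (φ e.2) else 0) := by
      intro v
      simp only [ew, if_pos he]
      by_cases h1 : e.1 = v
      · subst h1
        simp [hne]
      · by_cases h2 : e.2 = v
        · subst h2
          have h1' : ¬ e.2 = e.1 := fun h => h1 h.symm
          simp [h1, h1']
        · have h1' : ¬ v = e.1 := fun h => h1 h.symm
          have h2' : ¬ v = e.2 := fun h => h2 h.symm
          simp [h1, h2, h1', h2']
    rw [Finset.sum_congr rfl fun v _ => key v, Finset.sum_add_distrib,
      Finset.sum_ite_eq' Finset.univ e.1 fun _ => P.pifst e (φ e.1),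
      Finset.sum_ite_eq' Finset.univ e.2 fun _ => P.m - P.pisnd e (φ e.2)]
    simp only [Finset.mem_univ, if_pos]
    rw [hcons e he]
    exact Nat.add_sub_cancel' (P.pisnd_le e he _)

lemma cost1_le (P : RCSP V S) (F : ℕ) {r : ℕ} (idx : V ⊕ (V × V) → Fin r)
    (ord : V ⊕ (V × V) → ℕ) (hset : P.EmbedSetting F idx ord)
    (ℓ : Fin r) (v : V) (σ : S) :
    P.cost1 F idx ord ℓ (v, σ) ≤ P.Mbig F * P.J idx ℓ v := by
  classical
  obtain ⟨hreg, hF1, hF2, hcard, hbij⟩ := hset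
  have hQm : P.m ≤ P.Q F := by
    have hV : 1 ≤ Fintype.card V := le_trans hF1 hF2
    have hS : 1 ≤ Fintype.card S := Fintype.card_pos_iff.mpr ⟨σ⟩
    have hF : 1 ≤ F ^ 2 := Nat.one_le_pow _ _ hF1
    calc P.m = 1 * 1 * P.m * 1 * 1 := by ring
    _ ≤ 3 * F ^ 2 * P.m * Fintype.card V * Fintype.card S := by
        apply Nat.mul_le_mul (Nat.mul_le_mul (Nat.mul_le_mul (Nat.mul_le_mul (by omega) hF)
          le_rfl) hV) hS
    _ = P.Q F := rfl
  have hQ1 : 1 ≤ P.Q F := le_trans P.m_pos hQm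
  have hterm : ∀ j ∈ (P.Dblock idx ℓ).filter fun j => incF v j,
      P.ew j (v, σ) * P.Q F ^ ord j ≤ P.Mbig F := by
    intro j hj
    have hjD : j ∈ P.Dblock idx ℓ := Finset.mem_of_mem_filter _ hj
    have hord : ord j ≤ (P.Dblock idx ℓ).card := by
      have := (hbij ℓ).mapsTo hjD
      exact this.2
    have h1 : P.ew j (v, σ) * P.Q F ^ ord j ≤ P.m * P.Q F ^ F :=
      Nat.mul_le_mul (P.ew_le j (v, σ))
        (Nat.pow_le_pow_right hQ1 (le_trans hord (hcard ℓ)))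
    calc P.ew j (v, σ) * P.Q F ^ ord j ≤ P.m * P.Q F ^ F := h1
    _ ≤ P.Q F * P.Q F ^ F := Nat.mul_le_mul_right _ hQm
    _ = P.Q F ^ (F + 1) := by ring
    _ ≤ P.Q F ^ (2 * F) := Nat.pow_le_pow_right hQ1 (by omega)
    _ = P.Mbig F := rfl
  have hzero : ∀ j ∈ P.Dblock idx ℓ, ¬ (incF v j : Prop) →
      P.ew j (v, σ) * P.Q F ^ ord j = 0 := by
    intro j _ h
    rw [P.ew_eq_zero j v σ h, Nat.zero_mul]
  calc P.cost1 F idx ord ℓ (v, σ)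
      = ∑ j ∈ (P.Dblock idx ℓ).filter fun j => incF v j,
          P.ew j (v, σ) * P.Q F ^ ord j := by
        unfold cost1
        rw [Finset.sum_filter_of_ne]
        intro j hj hne
        by_contra h
        exact hne (hzero j hj h)
  _ ≤ ((P.Dblock idx ℓ).filter fun j => incF v j).card * P.Mbig F := by
        apply le_trans (Finset.sum_le_card_nsmul _ _ _ hterm)
        simp [Nat.smul_one_eq_cast]
  _ = P.Mbig F * P.J idx ℓ v := by rw [P.J_eq idx ℓ v, Nat.mul_comm]

end RCSP

namespace RCSP
variable {V S : Type} [Fintype V] [DecidableEq V] [Fintype S] [DecidableEq S]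

lemma Dblock_subset (P : RCSP V S) {r : ℕ} (idx : V ⊕ (V × V) → Fin r) (ℓ : Fin r) :
    P.Dblock idx ℓ ⊆ P.Dset := Finset.filter_subset _ _
end RCSP

/-- **Completeness of the dimension embedding reduction.**
If `Π` admits a consistent partial assignment of size `|V(G)|`, i.e. a total consistent
assignment `φ : V → Σ`, then `Sol = {(v, φ v) : v ∈ V(G)}` is a solution for `I(Π,F)`
of profit exactly `|V(G)| + 2·|E(G)|`, and every budget constraint is satisfied with
equality. -/
theorem embed_completeness
    {V S : Type} [Fintype V] [DecidableEq V] [Fintype S] [DecidableEq S]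
    (P : RCSP V S) (F : ℕ) {r : ℕ} (idx : V ⊕ (V × V) → Fin r)
    (ord : V ⊕ (V × V) → ℕ) (hset : P.EmbedSetting F idx ord)
    (φ : V → S) (hcons : ∀ e ∈ P.E, P.pifst e (φ e.1) = P.pisnd e (φ e.2))
    (Sol : Finset (V × S)) (hSol : Sol = Finset.univ.image fun v : V => (v, φ v)) :
    P.IsEmbedSolution F idx ord Sol ∧
    (∀ ℓ : Fin r, ∑ i ∈ Sol, P.cost1 F idx ord ℓ i = P.budget1 F idx ord ℓ) ∧
    (∀ ℓ : Fin r, ∑ i ∈ Sol, P.cost2 F idx ord ℓ i = P.budget2 F idx ord ℓ) ∧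
    P.profit idx Sol = Fintype.card V + 2 * P.E.card := by
  have hreg := hset.1
  have hsum : ∀ f : V × S → ℕ, ∑ i ∈ Sol, f i = ∑ v : V, f (v, φ v) := by
    intro f
    rw [hSol, Finset.sum_image]
    intro a _ b _ h
    exact congrArg Prod.fst h
  -- budget 1 equalities
  have h1 : ∀ ℓ : Fin r, ∑ i ∈ Sol, P.cost1 F idx ord ℓ i = P.budget1 F idx ord ℓ := by
    intro ℓ
    rw [hsum]
    unfold RCSP.cost1 RCSP.budget1
    rw [Finset.sum_comm]
    refine Finset.sum_congr rfl fun j hj => ?_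
    rw [← Finset.sum_mul, P.sum_ew φ hcons j (P.Dblock_subset idx ℓ hj)]
  -- budget 2 equalities
  have h2 : ∀ ℓ : Fin r, ∑ i ∈ Sol, P.cost2 F idx ord ℓ i = P.budget2 F idx ord ℓ := by
    intro ℓ
    rw [hsum]
    have hle : ∀ v : V, P.cost1 F idx ord ℓ (v, φ v) ≤ P.Mbig F * P.J idx ℓ v :=
      fun v => P.cost1_le F idx ord hset ℓ v (φ v)
    have key : (∑ v : V, P.cost2 F idx ord ℓ (v, φ v)) +
        (∑ v : V, P.cost1 F idx ord ℓ (v, φ v)) = P.Mbig F * P.N idx ℓ := by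
      rw [← Finset.sum_add_distrib]
      have : ∀ v : V, P.cost2 F idx ord ℓ (v, φ v) + P.cost1 F idx ord ℓ (v, φ v) =
          P.Mbig F * P.J idx ℓ v := by
        intro v
        unfold RCSP.cost2
        exact Nat.sub_add_cancel (hle v)
      rw [Finset.sum_congr rfl fun v _ => this v]
      unfold RCSP.N
      rw [Finset.mul_sum]
    have h1' := h1 ℓ
    rw [hsum] at h1'
    unfold RCSP.budget2
    omega
  -- profit
  have hJv : ∀ v : V, ∑ ℓ : Fin r, P.J idx ℓ v = 4 := by
    intro v
    unfold RCSP.J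
    rw [Finset.sum_add_distrib]
    have hA : ∑ ℓ : Fin r, ((P.adj v).filter fun e => idx (Sum.inr e) = ℓ).card
        = (P.adj v).card := by
      simp only [Finset.card_filter]
      rw [Finset.sum_comm]
      simp [Finset.sum_ite_eq]
    have hB : (∑ ℓ : Fin r, if idx (Sum.inl v) = ℓ then 1 else 0) = 1 := by
      simp [Finset.sum_ite_eq]
    rw [hA, hB, hreg v]
  have hhand : ∑ v : V, (P.adj v).card = 2 * P.E.card := by
    unfold RCSP.adj
    simp only [Finset.card_filter]
    rw [Finset.sum_comm]
    have : ∀ e ∈ P.E, (∑ v : V, if e.1 = v ∨ e.2 = v then 1 else 0) = 2 := by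
      intro e he
      have hne := P.ne_of_mem e he
      have split : ∀ v : V, (if e.1 = v ∨ e.2 = v then 1 else 0) =
          (if e.1 = v then 1 else 0) + (if e.2 = v then 1 else 0) := by
        intro v
        by_cases h1 : e.1 = v <;> by_cases h2 : e.2 = v <;> simp_all
      rw [Finset.sum_congr rfl fun v _ => split v, Finset.sum_add_distrib]
      simp [Finset.sum_ite_eq]
    rw [Finset.sum_congr rfl this]
    simp [mul_comm]
  have hprof : P.profit idx Sol = 4 * Fintype.card V := by
    unfold RCSP.profit
    rw [hsum fun i => ∑ ℓ : Fin r, P.J idx ℓ i.1]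
    simp only
    rw [Finset.sum_congr rfl fun v _ => hJv v]
    simp [Finset.card_univ, mul_comm]
  have h3V : 3 * Fintype.card V = 2 * P.E.card := by
    rw [← hhand, Finset.sum_congr rfl fun v _ => hreg v]
    simp [Finset.card_univ, mul_comm]
  refine ⟨⟨fun ℓ => le_of_eq (h1 ℓ), fun ℓ => le_of_eq (h2 ℓ)⟩, h1, h2, ?_⟩
  rw [hprof]
  omega
end

section
/- In the setting of the dimension embedding reduction, for every solution S of I(Π,F) and every ℓ ∈ [r]: if Σ_{(v,σ)∈S} J(ℓ,v) = N_ℓ, then w_j(S) := Σ_{i∈S} w_j(i) = m for every j ∈ D_ℓ. -/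
section DigitAux

lemma geom_aux (Q : ℕ) (hQ : 0 < Q) (n : ℕ) :
    (∑ t ∈ Finset.range n, (Q - 1) * Q ^ t) + 1 = Q ^ n := by
  induction n with
  | zero => simp
  | succ n ih =>
    rw [Finset.sum_range_succ, pow_succ]
    have h2 : (Q - 1) * Q ^ n + Q ^ n = Q ^ n * Q := by
      rw [mul_comm (Q ^ n) Q, ← add_one_mul]
      congr 1
      omega
    linarith

lemma digit_eq (Q : ℕ) (hQ : 0 < Q) :
    ∀ (n : ℕ) (f g : ℕ → ℕ), (∀ t, f t < Q) → (∀ t, g t < Q) →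
    (∑ t ∈ Finset.range n, f t * Q ^ t) = (∑ t ∈ Finset.range n, g t * Q ^ t) →
    ∀ t < n, f t = g t := by
  intro n
  induction n with
  | zero => intro f g _ _ _ t ht; omega
  | succ n ih =>
    intro f g hf hg hsum t ht
    rw [Finset.sum_range_succ' (fun t => f t * Q ^ t),
        Finset.sum_range_succ' (fun t => g t * Q ^ t)] at hsum
    simp only [pow_succ, pow_zero, mul_one] at hsum
    have hA : ∑ k ∈ Finset.range n, f (k+1) * (Q ^ k * Q)
        = Q * ∑ k ∈ Finset.range n, f (k+1) * Q ^ k := by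
      rw [Finset.mul_sum]; apply Finset.sum_congr rfl; intros; ring
    have hB : ∑ k ∈ Finset.range n, g (k+1) * (Q ^ k * Q)
        = Q * ∑ k ∈ Finset.range n, g (k+1) * Q ^ k := by
      rw [Finset.mul_sum]; apply Finset.sum_congr rfl; intros; ring
    rw [hA, hB] at hsum
    set A := ∑ k ∈ Finset.range n, f (k+1) * Q ^ k with hAdef
    set B := ∑ k ∈ Finset.range n, g (k+1) * Q ^ k with hBdef
    have h0 : f 0 = g 0 := by
      have := congrArg (· % Q) hsum
      simpa [Nat.mul_add_mod, Nat.mod_eq_of_lt (hf 0), Nat.mod_eq_of_lt (hg 0)] using this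
    have hAB : A = B := by
      rw [h0] at hsum
      have : Q * A = Q * B := by omega
      exact Nat.eq_of_mul_eq_mul_left hQ this
    rcases t with _ | s
    · exact h0
    · exact ih (fun k => f (k+1)) (fun k => g (k+1)) (fun k => hf _) (fun k => hg _) hAB s
        (by omega)

end DigitAux

namespace RCSP

variable {V S : Type} [Fintype V] [DecidableEq V] [Fintype S] [DecidableEq S]

lemma sum_ew_block_le (P : RCSP V S) {r : ℕ} (idx : V ⊕ (V × V) → Fin r) (ℓ : Fin r)
    (v : V) (σ : S) :
    ∑ j ∈ P.Dblock idx ℓ, P.ew j (v, σ) ≤ P.m * P.J idx ℓ v := by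
  classical
  have hdisj : Disjoint ((Finset.univ.image (Sum.inl : V → V ⊕ (V × V))).filter
      (fun j => idx j = ℓ)) (((P.E.image Sum.inr).filter (fun j => idx j = ℓ))) := by
    simp only [Finset.disjoint_left, Finset.mem_filter, Finset.mem_image]
    rintro x ⟨⟨u, -, rfl⟩, -⟩ ⟨⟨e, -, h⟩, -⟩
    exact absurd h (by simp)
  rw [Dblock, Dset, Finset.filter_union, Finset.sum_union hdisj]
  have h1 : ∑ j ∈ (Finset.univ.image (Sum.inl : V → V ⊕ (V × V))).filter
      (fun j => idx j = ℓ), P.ew j (v, σ)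
      = (if idx (Sum.inl v) = ℓ then P.m else 0) := by
    rw [Finset.filter_image, Finset.sum_image
      (by intros; simpa using ‹Sum.inl _ = Sum.inl _›)]
    · simp only [ew]
      rw [Finset.sum_ite_eq]
      simp
  have h2 : ∑ j ∈ (P.E.image Sum.inr).filter (fun j => idx j = ℓ), P.ew j (v, σ)
      ≤ P.m * ((P.adj v).filter fun e => idx (Sum.inr e) = ℓ).card := by
    rw [Finset.filter_image, Finset.sum_image (by intros a _ b _ h; simpa using h)]
    have hkey : ∀ e ∈ P.E.filter (fun e => idx (Sum.inr e) = ℓ),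
        P.ew (Sum.inr e) (v, σ) ≠ 0 → (e.1 = v ∨ e.2 = v) := by
      intro e he hne
      simp only [ew] at hne
      by_contra hc
      push_neg at hc
      simp [hc.1, hc.2] at hne
    rw [← Finset.sum_filter_of_ne hkey, Finset.filter_comm]
    calc ∑ e ∈ (P.E.filter (fun e => e.1 = v ∨ e.2 = v)).filter
            (fun e => idx (Sum.inr e) = ℓ), P.ew (Sum.inr e) (v, σ)
        ≤ ∑ _e ∈ (P.adj v).filter (fun e => idx (Sum.inr e) = ℓ), P.m := by
          apply Finset.sum_le_sum; intro e _; exact P.ew_le _ _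
      _ = _ := by rw [Finset.sum_const, smul_eq_mul, mul_comm]
  calc _ ≤ (if idx (Sum.inl v) = ℓ then P.m else 0)
        + P.m * ((P.adj v).filter fun e => idx (Sum.inr e) = ℓ).card := by
        rw [h1]; omega
    _ ≤ P.m * P.J idx ℓ v := by
        rw [J, Nat.mul_add]
        split_ifs <;> omega

end RCSP

/-- In the setting of the dimension embedding reduction, for every
solution `Sol` of `I(Π,F)` and every `ℓ ∈ [r]`: if `Σ_{(v,σ) ∈ Sol} J(ℓ,v) = N_ℓ`,
then `w_j(Sol) = Σ_{i ∈ Sol} w_j(i) = m` for every `j ∈ D_ℓ`. -/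
theorem embed_tight_weights
    {V S : Type} [Fintype V] [DecidableEq V] [Fintype S] [DecidableEq S]
    (P : RCSP V S) (F : ℕ) {r : ℕ} (idx : V ⊕ (V × V) → Fin r)
    (ord : V ⊕ (V × V) → ℕ) (hset : P.EmbedSetting F idx ord)
    (Sol : Finset (V × S)) (hSol : P.IsEmbedSolution F idx ord Sol)
    (ℓ : Fin r) (htight : P.Tight idx Sol ℓ) :
    ∀ j ∈ P.Dblock idx ℓ, ∑ i ∈ Sol, P.ew j i = P.m := by
  classical
  obtain ⟨hreg, hF1, hFV, hcardF, hbij⟩ := hset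
  obtain ⟨hb1, hb2⟩ := hSol
  rcases Finset.eq_empty_or_nonempty (P.Dblock idx ℓ) with hD | ⟨j0, hj0⟩
  · intro j hj; rw [hD] at hj; exact absurd hj (Finset.notMem_empty j)
  -- N_ℓ ≥ 1
  have hNpos : 1 ≤ P.N idx ℓ := by
    obtain ⟨v0, hv0⟩ : ∃ v : V, 1 ≤ P.J idx ℓ v := by
      rw [RCSP.Dblock, Finset.mem_filter] at hj0
      obtain ⟨hj0D, hj0idx⟩ := hj0
      rcases j0 with u | e
      · exact ⟨u, by simp [RCSP.J, hj0idx]⟩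
      · have heE : e ∈ P.E := by
          rw [RCSP.Dset, Finset.mem_union] at hj0D
          rcases hj0D with h | h
          · exfalso; obtain ⟨a, -, ha⟩ := Finset.mem_image.mp h; exact absurd ha (by simp)
          · obtain ⟨e', he', heq⟩ := Finset.mem_image.mp h
            obtain rfl : e' = e := by simpa using heq
            exact he'
        refine ⟨e.1, ?_⟩
        have hmem : e ∈ (P.adj e.1).filter (fun e' => idx (Sum.inr e') = ℓ) := by
          simp [RCSP.adj, Finset.mem_filter, heE, hj0idx]
        have hcpos := Finset.card_pos.mpr ⟨e, hmem⟩
        rw [RCSP.J]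
        omega
    calc 1 ≤ P.J idx ℓ v0 := hv0
      _ ≤ P.N idx ℓ := Finset.single_le_sum (fun _ _ => Nat.zero_le _) (Finset.mem_univ v0)
  -- Sol is nonempty, hence V and S are nonempty
  have hSolne : Sol.Nonempty := by
    by_contra h
    rw [Finset.not_nonempty_iff_eq_empty] at h
    rw [RCSP.Tight, h, Finset.sum_empty] at htight
    omega
  obtain ⟨⟨v1, σ1⟩, -⟩ := hSolne
  have hScard : 1 ≤ Fintype.card S := Fintype.card_pos_iff.mpr ⟨σ1⟩
  have hVcard : 1 ≤ Fintype.card V := Fintype.card_pos_iff.mpr ⟨v1⟩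
  have hm : 1 ≤ P.m := P.m_pos
  -- bounds on Q
  have hprod : 1 ≤ Fintype.card V * Fintype.card S * P.m :=
    Nat.mul_pos (Nat.mul_pos hVcard hScard) hm
  have hmQ : Fintype.card V * Fintype.card S * P.m < P.Q F := by
    have hF2 : 1 ≤ F ^ 2 := Nat.one_le_pow _ _ (by omega)
    have h1 : Fintype.card V * Fintype.card S * P.m
        < 3 * (Fintype.card V * Fintype.card S * P.m) := by linarith
    have h2 : 3 * (Fintype.card V * Fintype.card S * P.m)
        ≤ (3 * (Fintype.card V * Fintype.card S * P.m)) * F ^ 2 :=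
      Nat.le_mul_of_pos_right _ hF2
    have h3 : (3 * (Fintype.card V * Fintype.card S * P.m)) * F ^ 2
        = 3 * F ^ 2 * P.m * Fintype.card V * Fintype.card S := by ring
    rw [RCSP.Q]
    linarith
  have hQpos : 0 < P.Q F := by omega
  have hmQ' : P.m < P.Q F := by
    have : P.m ≤ Fintype.card V * Fintype.card S * P.m :=
      Nat.le_mul_of_pos_left _ (Nat.mul_pos hVcard hScard)
    omega
  -- every column sum of weights is < Q
  have hWle : ∀ j : V ⊕ (V × V),
      (∑ i ∈ Sol, P.ew j i) ≤ Fintype.card V * Fintype.card S * P.m := by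
    intro j
    calc ∑ i ∈ Sol, P.ew j i ≤ Sol.card * P.m := by
          have := Finset.sum_le_card_nsmul Sol (fun i => P.ew j i) P.m
            (fun i _ => P.ew_le j i)
          simpa using this
      _ ≤ Fintype.card V * Fintype.card S * P.m := by
          have hc : Sol.card ≤ Fintype.card (V × S) := Finset.card_le_univ Sol
          rw [Fintype.card_prod] at hc
          exact Nat.mul_le_mul_right _ hc
  -- ord facts
  have hord : ∀ j ∈ P.Dblock idx ℓ, 1 ≤ ord j ∧ ord j ≤ F := by
    intro j hj
    have hmem := (hbij ℓ).mapsTo (Finset.mem_coe.mpr hj)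
    rw [Set.mem_Icc] at hmem
    exact ⟨hmem.1, hmem.2.trans (hcardF ℓ)⟩
  -- per-item cost bound
  have hmQF : P.m * P.Q F ^ F ≤ P.Q F ^ (2 * F) := by
    calc P.m * P.Q F ^ F ≤ P.Q F ^ F * P.Q F ^ F := by
          apply Nat.mul_le_mul_right
          exact le_trans (le_of_lt hmQ') (Nat.le_self_pow (by omega) _)
      _ = P.Q F ^ (2 * F) := by rw [← pow_add]; ring_nf
  have hci : ∀ i ∈ Sol, P.cost1 F idx ord ℓ i ≤ P.Mbig F * P.J idx ℓ i.1 := by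
    rintro ⟨v, σ⟩ -
    calc P.cost1 F idx ord ℓ (v, σ)
        = ∑ j ∈ P.Dblock idx ℓ, P.ew j (v, σ) * P.Q F ^ ord j := rfl
      _ ≤ ∑ j ∈ P.Dblock idx ℓ, P.ew j (v, σ) * P.Q F ^ F := by
          apply Finset.sum_le_sum
          intro j hj
          exact Nat.mul_le_mul_left _ (Nat.pow_le_pow_right hQpos (hord j hj).2)
      _ = (∑ j ∈ P.Dblock idx ℓ, P.ew j (v, σ)) * P.Q F ^ F := by rw [Finset.sum_mul]
      _ ≤ (P.m * P.J idx ℓ v) * P.Q F ^ F :=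
          Nat.mul_le_mul_right _ (P.sum_ew_block_le idx ℓ v σ)
      _ = (P.m * P.Q F ^ F) * P.J idx ℓ v := by ring
      _ ≤ P.Q F ^ (2 * F) * P.J idx ℓ v := Nat.mul_le_mul_right _ hmQF
      _ = P.Mbig F * P.J idx ℓ (v, σ).1 := rfl
  -- the budget is at most M·N
  have hB1 : P.budget1 F idx ord ℓ ≤ P.Mbig F * P.N idx ℓ := by
    have h1 : P.budget1 F idx ord ℓ ≤ ∑ j ∈ P.Dblock idx ℓ, (P.Q F - 1) * P.Q F ^ ord j := by
      apply Finset.sum_le_sum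
      intro j _
      exact Nat.mul_le_mul_right _ (by omega)
    have h2 : ∑ j ∈ P.Dblock idx ℓ, (P.Q F - 1) * P.Q F ^ ord j
        = ∑ t ∈ (P.Dblock idx ℓ).image ord, (P.Q F - 1) * P.Q F ^ t := by
      rw [Finset.sum_image]
      intro x hx y hy hxy
      exact (hbij ℓ).injOn (Finset.mem_coe.mpr hx) (Finset.mem_coe.mpr hy) hxy
    have h3 : (P.Dblock idx ℓ).image ord ⊆ Finset.range (F + 1) := by
      intro t ht
      obtain ⟨j, hj, rfl⟩ := Finset.mem_image.mp ht
      exact Finset.mem_range.mpr (by have := hord j hj; omega)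
    have h4 : ∑ t ∈ (P.Dblock idx ℓ).image ord, (P.Q F - 1) * P.Q F ^ t
        ≤ ∑ t ∈ Finset.range (F + 1), (P.Q F - 1) * P.Q F ^ t :=
      Finset.sum_le_sum_of_subset h3
    have h5 := geom_aux (P.Q F) hQpos (F + 1)
    have h6 : P.Q F ^ (F + 1) ≤ P.Q F ^ (2 * F) := Nat.pow_le_pow_right hQpos (by omega)
    have h7 : P.Mbig F ≤ P.Mbig F * P.N idx ℓ := Nat.le_mul_of_pos_right _ hNpos
    have h8 : P.Mbig F = P.Q F ^ (2 * F) := rfl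
    omega
  -- the first-budget constraint is tight
  have hsc : ∑ i ∈ Sol, P.cost1 F idx ord ℓ i = P.budget1 F idx ord ℓ := by
    have h1 := hb1 ℓ
    have h2 := hb2 ℓ
    simp only [RCSP.cost2, RCSP.budget2] at h2
    have h3 : ∑ i ∈ Sol, (P.Mbig F * P.J idx ℓ i.1 - P.cost1 F idx ord ℓ i)
        + ∑ i ∈ Sol, P.cost1 F idx ord ℓ i = P.Mbig F * P.N idx ℓ := by
      rw [← Finset.sum_add_distrib,
        Finset.sum_congr rfl (fun i hi => Nat.sub_add_cancel (hci i hi)),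
        ← Finset.mul_sum, htight]
    omega
  -- rewrite as an equality of digit expansions over the block
  have hswap : ∑ j ∈ P.Dblock idx ℓ, (∑ i ∈ Sol, P.ew j i) * P.Q F ^ ord j
      = ∑ j ∈ P.Dblock idx ℓ, P.m * P.Q F ^ ord j := by
    calc ∑ j ∈ P.Dblock idx ℓ, (∑ i ∈ Sol, P.ew j i) * P.Q F ^ ord j
        = ∑ j ∈ P.Dblock idx ℓ, ∑ i ∈ Sol, P.ew j i * P.Q F ^ ord j := by
          apply Finset.sum_congr rfl; intros; rw [Finset.sum_mul]
      _ = ∑ i ∈ Sol, ∑ j ∈ P.Dblock idx ℓ, P.ew j i * P.Q F ^ ord j := Finset.sum_comm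
      _ = ∑ i ∈ Sol, P.cost1 F idx ord ℓ i := rfl
      _ = P.budget1 F idx ord ℓ := hsc
      _ = ∑ j ∈ P.Dblock idx ℓ, P.m * P.Q F ^ ord j := rfl
  -- fiberwise over the digit positions
  have hmaps : ∀ j ∈ P.Dblock idx ℓ, ord j ∈ Finset.range (F + 1) := by
    intro j hj
    exact Finset.mem_range.mpr (by have := hord j hj; omega)
  have hfibcard : ∀ t : ℕ,
      ((P.Dblock idx ℓ).filter (fun j => ord j = t)).card ≤ 1 := by
    intro t
    rw [Finset.card_le_one]
    intro a ha b hb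
    rw [Finset.mem_filter] at ha hb
    exact (hbij ℓ).injOn (Finset.mem_coe.mpr ha.1) (Finset.mem_coe.mpr hb.1)
      (ha.2.trans hb.2.symm)
  have hfsum : ∀ t : ℕ,
      (∑ j ∈ (P.Dblock idx ℓ).filter (fun j => ord j = t), ∑ i ∈ Sol, P.ew j i) < P.Q F := by
    intro t
    calc ∑ j ∈ (P.Dblock idx ℓ).filter (fun j => ord j = t), ∑ i ∈ Sol, P.ew j i
        ≤ ((P.Dblock idx ℓ).filter (fun j => ord j = t)).card
          * (Fintype.card V * Fintype.card S * P.m) := by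
          have := Finset.sum_le_card_nsmul ((P.Dblock idx ℓ).filter (fun j => ord j = t))
            (fun j => ∑ i ∈ Sol, P.ew j i) (Fintype.card V * Fintype.card S * P.m)
            (fun j _ => hWle j)
          simpa using this
      _ ≤ 1 * (Fintype.card V * Fintype.card S * P.m) :=
          Nat.mul_le_mul_right _ (hfibcard t)
      _ < P.Q F := by omega
  have hgsum : ∀ t : ℕ,
      (∑ _j ∈ (P.Dblock idx ℓ).filter (fun j => ord j = t), P.m) < P.Q F := by
    intro t
    rw [Finset.sum_const, smul_eq_mul]
    have := hfibcard t
    calc ((P.Dblock idx ℓ).filter (fun j => ord j = t)).card * P.m ≤ 1 * P.m :=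
        Nat.mul_le_mul_right _ (hfibcard t)
      _ < P.Q F := by omega
  have hdigsum : ∑ t ∈ Finset.range (F + 1),
        (∑ j ∈ (P.Dblock idx ℓ).filter (fun j => ord j = t), ∑ i ∈ Sol, P.ew j i) * P.Q F ^ t
      = ∑ t ∈ Finset.range (F + 1),
        (∑ _j ∈ (P.Dblock idx ℓ).filter (fun j => ord j = t), P.m) * P.Q F ^ t := by
    have e1 : ∀ (w : (V ⊕ (V × V)) → ℕ),
        ∑ t ∈ Finset.range (F + 1),
          (∑ j ∈ (P.Dblock idx ℓ).filter (fun j => ord j = t), w j) * P.Q F ^ t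
        = ∑ j ∈ P.Dblock idx ℓ, w j * P.Q F ^ ord j := by
      intro w
      rw [← Finset.sum_fiberwise_of_maps_to hmaps (fun j => w j * P.Q F ^ ord j)]
      apply Finset.sum_congr rfl
      intro t _
      rw [Finset.sum_mul]
      apply Finset.sum_congr rfl
      intro j hj
      rw [(Finset.mem_filter.mp hj).2]
    rw [e1, e1]
    exact hswap
  have hdig := digit_eq (P.Q F) hQpos (F + 1)
    (fun t => ∑ j ∈ (P.Dblock idx ℓ).filter (fun j => ord j = t), ∑ i ∈ Sol, P.ew j i)
    (fun t => ∑ _j ∈ (P.Dblock idx ℓ).filter (fun j => ord j = t), P.m)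
    hfsum hgsum hdigsum
  -- conclude
  intro j hj
  have hfib_j : (P.Dblock idx ℓ).filter (fun j' => ord j' = ord j) = {j} := by
    apply Finset.eq_singleton_iff_unique_mem.mpr
    refine ⟨Finset.mem_filter.mpr ⟨hj, rfl⟩, ?_⟩
    intro x hx
    obtain ⟨hx1, hx2⟩ := Finset.mem_filter.mp hx
    exact (hbij ℓ).injOn (Finset.mem_coe.mpr hx1) (Finset.mem_coe.mpr hj) hx2
  have hfin := hdig (ord j) (Finset.mem_range.mp (hmaps j hj))
  simp only [hfib_j, Finset.sum_singleton] at hfin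
  exact hfin
end

section
/- In the setting of the dimension embedding reduction, let S be a solution of I(Π,F), let T = {ℓ ∈ [r] : Σ_{(v,σ)∈S} J(ℓ,v) = N_ℓ}, for j ∈ D let ℓ(j) denote the unique index with j ∈ D_{ℓ(j)}, and let V* = {v ∈ V(G) : ℓ(x) ∈ T for every x ∈ Adj_G(v) ∪ {v}}. Then for every v ∈ V* there is exactly one σ_v ∈ Σ such that (v, σ_v) ∈ S. -/
/-
Put `ℓ = ℓ(v)`. Every cost `c_{(ℓ,1)}(i)` has base-`Q` digits `w_j(i) ≤ m < Q` in positions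
`1, …, F`, so it is below `Q^{F+1} ≤ M`, and it vanishes when `J(ℓ, i) = 0`; hence
`c_{(ℓ,1)}(i) ≤ M · J(ℓ,i)` and the truncated subtraction in `c_{(ℓ,2)}` is exact. Tightness of
`ℓ` turns the budget constraint of dimension `(ℓ,2)` into `Σ_S c_{(ℓ,1)} ≥ B_{(ℓ,1)}`, so the
constraint of dimension `(ℓ,1)` holds with equality. Both sides are base-`Q` expansions whose
digits are below `Q`, so they agree digit by digit; the digit at position `ord_ℓ(v)` reads
`m · #{σ | (v,σ) ∈ S} = m`.
-/

open Finset

theorem Nat.sum_mul_pow_lt_pow {ι : Type*} {A : Finset ι} {b k : ℕ} {e d : ι → ℕ} (hb : 0 < b)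
    (he : Set.InjOn e A) (hek : ∀ j ∈ A, e j < k) (hd : ∀ j ∈ A, d j < b) :
    ∑ j ∈ A, d j * b ^ e j < b ^ k := by
  obtain ⟨c, rfl⟩ : ∃ c, b = c + 1 := ⟨b - 1, by omega⟩
  calc ∑ j ∈ A, d j * (c + 1) ^ e j ≤ ∑ j ∈ A, c * (c + 1) ^ e j :=
        sum_le_sum fun j hj => Nat.mul_le_mul_right _ (Nat.le_of_lt_succ (hd j hj))
    _ = ∑ t ∈ A.image e, c * (c + 1) ^ t :=
        (sum_image (f := fun t => c * (c + 1) ^ t) fun _ hx _ hy h => he hx hy h).symm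
    _ ≤ ∑ t ∈ range k, c * (c + 1) ^ t :=
        sum_le_sum_of_subset fun t ht => by
          obtain ⟨j, hj, rfl⟩ := mem_image.1 ht
          exact mem_range.2 (hek j hj)
    _ < (c + 1) ^ k := by
        rw [← geom_sum_mul_add c k, ← mul_sum, mul_comm]
        exact Nat.lt_succ_self _

theorem Nat.sum_mul_pow_div_pow_mod {ι : Type*} [DecidableEq ι] {A : Finset ι} {b : ℕ}
    {e d : ι → ℕ} (hb : 0 < b) (he : Set.InjOn e A) (hd : ∀ j ∈ A, d j < b) {j₀ : ι}
    (hj₀ : j₀ ∈ A) :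
    (∑ j ∈ A, d j * b ^ e j) / b ^ e j₀ % b = d j₀ := by
  set k := e j₀
  set low := (A.erase j₀).filter fun j => e j < k
  set high := (A.erase j₀).filter fun j => ¬ e j < k
  have hlow : ∑ j ∈ low, d j * b ^ e j < b ^ k :=
    Nat.sum_mul_pow_lt_pow hb (he.mono fun j hj => mem_of_mem_erase (mem_filter.1 hj).1)
      (fun j hj => (mem_filter.1 hj).2) fun j hj => hd j (mem_of_mem_erase (mem_filter.1 hj).1)
  obtain ⟨Z, hZ⟩ : b ^ (k + 1) ∣ ∑ j ∈ high, d j * b ^ e j := by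
    refine dvd_sum fun j hj => Dvd.dvd.mul_left (pow_dvd_pow b ?_) _
    obtain ⟨hjA, hjk⟩ := mem_filter.1 hj
    have : e j ≠ k := fun h => (mem_erase.1 hjA).1 (he (mem_of_mem_erase hjA) hj₀ h)
    omega
  have hsplit : ∑ j ∈ A, d j * b ^ e j = ∑ j ∈ low, d j * b ^ e j + b ^ k * (d j₀ + b * Z) := by
    rw [← sum_erase_add A _ hj₀, ← sum_filter_add_sum_filter_not _ fun j => e j < k, hZ]
    ring
  rw [hsplit, Nat.add_mul_div_left _ _ (Nat.pow_pos hb), Nat.div_eq_of_lt hlow, zero_add,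
    Nat.add_mul_mod_self_left, Nat.mod_eq_of_lt (hd j₀ hj₀)]

theorem Finset.existsUnique_of_card_filter_fst_eq_one {α β : Type*} [DecidableEq α]
    {s : Finset (α × β)} {a : α} (h : #(s.filter fun x => x.1 = a) = 1) :
    ∃! b, (a, b) ∈ s := by
  obtain ⟨x, hx⟩ := card_eq_one.1 h
  have hmem : ∀ b, (a, b) ∈ s ↔ (a, b) = x := fun b => by simpa using Finset.ext_iff.1 hx (a, b)
  have hxa : x.1 = a := (mem_filter.1 (hx.symm ▸ mem_singleton_self x :
    x ∈ s.filter fun x => x.1 = a)).2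
  exact ⟨x.2, (hmem _).2 (Prod.ext hxa.symm rfl), fun b hb => congrArg Prod.snd ((hmem b).1 hb)⟩

namespace RCSP

variable {V S : Type} [Fintype V] [DecidableEq V] [Fintype S] [DecidableEq S] (P : RCSP V S)

theorem ew_le_m (j : V ⊕ (V × V)) (i : V × S) : P.ew j i ≤ P.m := by
  obtain ⟨w, σ⟩ := i
  rcases j with u | e
  · simp only [ew]
    split <;> omega
  · simp only [ew]
    split_ifs with hE
    · exact P.pifst_le e hE σ
    all_goals omega

theorem sum_ew_inl (s : Finset (V × S)) (v : V) :
    ∑ i ∈ s, P.ew (Sum.inl v) i = #(s.filter fun i => i.1 = v) * P.m := by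
  rw [card_filter, sum_mul]
  refine sum_congr rfl fun ⟨w, σ⟩ _ => ?_
  simp only [ew, ite_mul, one_mul, zero_mul]

theorem inl_mem_Dblock {r : ℕ} (idx : V ⊕ (V × V) → Fin r) (v : V) :
    Sum.inl v ∈ P.Dblock idx (idx (Sum.inl v)) := by
  simp [Dblock, Dset]

theorem J_self_pos {r : ℕ} (idx : V ⊕ (V × V) → Fin r) (v : V) :
    0 < P.J idx (idx (Sum.inl v)) v := by
  simp [J]

theorem J_le_N {r : ℕ} (idx : V ⊕ (V × V) → Fin r) (ℓ : Fin r) (v : V) :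
    P.J idx ℓ v ≤ P.N idx ℓ :=
  single_le_sum (f := P.J idx ℓ) (fun _ _ => Nat.zero_le _) (mem_univ v)

theorem J_pos_of_ew_ne_zero {r : ℕ} {idx : V ⊕ (V × V) → Fin r} {ℓ : Fin r}
    {j : V ⊕ (V × V)} (hj : j ∈ P.Dblock idx ℓ) {i : V × S} (hw : P.ew j i ≠ 0) :
    0 < P.J idx ℓ i.1 := by
  obtain ⟨w, σ⟩ := i
  have hjℓ : idx j = ℓ := (mem_filter.1 hj).2
  rcases j with u | e
  · have hwu : w = u := by_contra fun h => hw (by simp [ew, h])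
    subst hwu
    simp [J, hjℓ]
  · have he : e ∈ P.adj w := by
      by_contra h
      simp only [adj, mem_filter, not_and_or] at h
      apply hw
      simp only [ew]
      split_ifs <;> tauto
    have : 0 < #((P.adj w).filter fun e => idx (Sum.inr e) = ℓ) :=
      card_pos.2 ⟨e, mem_filter.2 ⟨he, hjℓ⟩⟩
    simp only [J]
    omega

theorem m_mul_card_lt_Q {F : ℕ} (hF : 1 ≤ F) {s : Finset (V × S)} (hs : s.Nonempty) :
    P.m * #s < P.Q F := by
  have hsVS : #s ≤ Fintype.card V * Fintype.card S := by
    simpa only [Fintype.card_prod] using card_le_univ s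
  have hmVS : P.m * #s ≤ P.m * (Fintype.card V * Fintype.card S) :=
    Nat.mul_le_mul_left _ hsVS
  have hpos : 0 < P.m * #s := Nat.mul_pos P.m_pos hs.card_pos
  have hF3 : 1 < 3 * F ^ 2 := by nlinarith
  calc P.m * #s ≤ P.m * (Fintype.card V * Fintype.card S) := hmVS
    _ < 3 * F ^ 2 * (P.m * (Fintype.card V * Fintype.card S)) :=
        (Nat.lt_mul_iff_one_lt_left (by omega)).2 hF3
    _ = P.Q F := by simp only [Q]; ring

section Block

variable {F r : ℕ} {idx : V ⊕ (V × V) → Fin r} {ord : V ⊕ (V × V) → ℕ} {ℓ : Fin r}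

theorem sum_block_lt_Mbig (hinj : Set.InjOn ord (P.Dblock idx ℓ))
    (hord : ∀ j ∈ P.Dblock idx ℓ, ord j ≤ F) (hF : 1 ≤ F) (hmQ : P.m < P.Q F) {d : _ → ℕ}
    (hd : ∀ j ∈ P.Dblock idx ℓ, d j ≤ P.m) :
    ∑ j ∈ P.Dblock idx ℓ, d j * P.Q F ^ ord j < P.Mbig F :=
  calc _ < P.Q F ^ (F + 1) := Nat.sum_mul_pow_lt_pow (by omega) hinj
          (fun j hj => Nat.lt_succ_of_le (hord j hj)) fun j hj => (hd j hj).trans_lt hmQ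
    _ ≤ P.Mbig F := Nat.pow_le_pow_right (by omega) (by omega)

theorem cost1_le_Mbig_mul_J (hinj : Set.InjOn ord (P.Dblock idx ℓ))
    (hord : ∀ j ∈ P.Dblock idx ℓ, ord j ≤ F) (hF : 1 ≤ F) (hmQ : P.m < P.Q F) (i : V × S) :
    P.cost1 F idx ord ℓ i ≤ P.Mbig F * P.J idx ℓ i.1 := by
  rcases Nat.eq_zero_or_pos (P.J idx ℓ i.1) with hJ | hJ
  · have hw : ∀ j ∈ P.Dblock idx ℓ, P.ew j i = 0 := fun j hj =>
      by_contra fun h => (P.J_pos_of_ew_ne_zero hj h).ne' hJ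
    rw [hJ, mul_zero, cost1]
    exact Nat.le_zero.2 (sum_eq_zero fun j hj => by rw [hw j hj, zero_mul])
  · exact (P.sum_block_lt_Mbig hinj hord hF hmQ fun j _ => P.ew_le_m j i).le.trans
      (Nat.le_mul_of_pos_right _ hJ)

theorem sum_cost1_eq_budget1 (hinj : Set.InjOn ord (P.Dblock idx ℓ))
    (hord : ∀ j ∈ P.Dblock idx ℓ, ord j ≤ F) (hF : 1 ≤ F) (hmQ : P.m < P.Q F)
    {Sol : Finset (V × S)} (hSol : P.IsEmbedSolution F idx ord Sol) (hT : P.Tight idx Sol ℓ)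
    (hN : 0 < P.N idx ℓ) :
    ∑ i ∈ Sol, P.cost1 F idx ord ℓ i = P.budget1 F idx ord ℓ := by
  have hcost2 : ∑ i ∈ Sol, P.cost2 F idx ord ℓ i
      = P.Mbig F * P.N idx ℓ - ∑ i ∈ Sol, P.cost1 F idx ord ℓ i := by
    simp only [cost2]
    rw [sum_tsub_distrib _ fun i _ => P.cost1_le_Mbig_mul_J hinj hord hF hmQ i,
      ← mul_sum, hT]
  have hB : P.budget1 F idx ord ℓ < P.Mbig F * P.N idx ℓ :=
    (P.sum_block_lt_Mbig hinj hord hF hmQ fun _ _ => le_rfl).trans_le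
      (Nat.le_mul_of_pos_right _ hN)
  have h1 := hSol.1 ℓ
  have h2 := hSol.2 ℓ
  rw [hcost2, budget2] at h2
  omega

theorem sum_ew_eq_m_of_sum_cost1_eq_budget1 (hinj : Set.InjOn ord (P.Dblock idx ℓ))
    {Sol : Finset (V × S)} (hmQ : P.m < P.Q F) (hSolQ : P.m * #Sol < P.Q F)
    (h : ∑ i ∈ Sol, P.cost1 F idx ord ℓ i = P.budget1 F idx ord ℓ)
    {j : V ⊕ (V × V)} (hj : j ∈ P.Dblock idx ℓ) :
    ∑ i ∈ Sol, P.ew j i = P.m := by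
  have hQ : 0 < P.Q F := by omega
  have hdig : ∀ j ∈ P.Dblock idx ℓ, ∑ i ∈ Sol, P.ew j i < P.Q F := fun j _ =>
    calc _ ≤ ∑ _i ∈ Sol, P.m := sum_le_sum fun i _ => P.ew_le_m j i
      _ = P.m * #Sol := by rw [sum_const, smul_eq_mul, mul_comm]
      _ < P.Q F := hSolQ
  have hswap : ∑ i ∈ Sol, P.cost1 F idx ord ℓ i
      = ∑ j ∈ P.Dblock idx ℓ, (∑ i ∈ Sol, P.ew j i) * P.Q F ^ ord j := by
    simp only [cost1, sum_mul]
    exact sum_comm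
  calc ∑ i ∈ Sol, P.ew j i
      = (∑ j ∈ P.Dblock idx ℓ, (∑ i ∈ Sol, P.ew j i) * P.Q F ^ ord j) / P.Q F ^ ord j
          % P.Q F := (Nat.sum_mul_pow_div_pow_mod hQ hinj hdig hj).symm
    _ = (∑ j ∈ P.Dblock idx ℓ, P.m * P.Q F ^ ord j) / P.Q F ^ ord j % P.Q F := by
        rw [← hswap, h, budget1]
    _ = P.m := Nat.sum_mul_pow_div_pow_mod hQ hinj (fun _ _ => hmQ) hj

end Block

end RCSP

/-- In the setting of the dimension embedding reduction, let `Sol` be a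
solution of `I(Π,F)`, let `T` be the set of tight indices, and let
`V* = {v : ℓ(x) ∈ T for every x ∈ Adj_G(v) ∪ {v}}`.  Then for every `v ∈ V*` there is
exactly one `σ_v ∈ Σ` with `(v, σ_v) ∈ Sol`. -/
theorem embed_unique_symbol
    {V S : Type} [Fintype V] [DecidableEq V] [Fintype S] [DecidableEq S]
    (P : RCSP V S) (F : ℕ) {r : ℕ} (idx : V ⊕ (V × V) → Fin r)
    (ord : V ⊕ (V × V) → ℕ) (hset : P.EmbedSetting F idx ord)
    (Sol : Finset (V × S)) (hSol : P.IsEmbedSolution F idx ord Sol)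
    (v : V) (hv : P.InVstar idx Sol v) :
    ∃! σ : S, (v, σ) ∈ Sol := by
  obtain ⟨-, hF, -, hcard, hbij⟩ := hset
  set ℓ := idx (Sum.inl v)
  have hord : ∀ j ∈ P.Dblock idx ℓ, ord j ≤ F := fun j hj =>
    ((hbij ℓ).mapsTo hj).2.trans (hcard ℓ)
  have hN : 0 < P.N idx ℓ := (P.J_self_pos idx v).trans_le (P.J_le_N idx ℓ v)
  have hSol_ne : Sol.Nonempty := by
    rw [nonempty_iff_ne_empty]
    rintro rfl
    exact hN.ne' (hv.1.symm.trans sum_empty)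
  have hSolQ := P.m_mul_card_lt_Q hF hSol_ne
  have hmQ : P.m < P.Q F := (Nat.le_mul_of_pos_right _ hSol_ne.card_pos).trans_lt hSolQ
  have hfull := P.sum_cost1_eq_budget1 (hbij ℓ).injOn hord hF hmQ hSol hv.1 hN
  have hdigit := P.sum_ew_eq_m_of_sum_cost1_eq_budget1 (hbij ℓ).injOn hmQ hSolQ hfull
    (P.inl_mem_Dblock idx v)
  rw [RCSP.sum_ew_inl] at hdigit
  exact existsUnique_of_card_filter_fst_eq_one
    (Nat.eq_of_mul_eq_mul_right P.m_pos (hdigit.trans (one_mul _).symm))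
end

section
/- In the setting of the dimension embedding reduction, let S be a solution of I(Π,F) with profit p(S) ≥ |V(G)| + 2·|E(G)| − q for some q ∈ ℕ, and let T = {ℓ ∈ [r] : Σ_{(v,σ)∈S} J(ℓ,v) = N_ℓ}. Then the number of non-tight indices satisfies |[r] \ T| ≤ q. -/
section AuxEmbed

variable {V S : Type} [Fintype V] [DecidableEq V] [Fintype S] [DecidableEq S]

lemma aux_sumN (P : RCSP V S) {r : ℕ} (idx : V ⊕ (V × V) → Fin r) :
    ∑ ℓ : Fin r, P.N idx ℓ = Fintype.card V + 2 * P.E.card := by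
  have hswap : ∑ ℓ : Fin r, P.N idx ℓ = ∑ v : V, ∑ ℓ : Fin r, P.J idx ℓ v := by
    rw [Finset.sum_comm]; rfl
  rw [hswap]
  have hv : ∀ v : V, ∑ ℓ : Fin r, P.J idx ℓ v = (P.adj v).card + 1 := by
    intro v
    unfold RCSP.J
    rw [Finset.sum_add_distrib]
    congr 1
    · exact (Finset.card_eq_sum_card_fiberwise (fun e _ => Finset.mem_univ _)).symm
    · simp
  simp_rw [hv]
  rw [Finset.sum_add_distrib]
  simp only [Finset.sum_const, Finset.card_univ, smul_eq_mul, mul_one]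
  rw [add_comm]
  congr 1
  have h1 : ∀ v : V, (P.adj v).card = ∑ e ∈ P.E, (if e.1 = v ∨ e.2 = v then 1 else 0) := by
    intro v
    rw [RCSP.adj, Finset.card_filter]
  simp_rw [h1]
  rw [Finset.sum_comm]
  have h2 : ∀ e ∈ P.E, ∑ v : V, (if e.1 = v ∨ e.2 = v then 1 else 0) = 2 := by
    intro e he
    rw [← Finset.card_filter]
    have : Finset.univ.filter (fun v : V => e.1 = v ∨ e.2 = v) = {e.1, e.2} := by
      ext v; simp [eq_comm]
    rw [this, Finset.card_insert_of_notMem (by simpa using P.ne_of_mem e he),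
      Finset.card_singleton]
  rw [Finset.sum_congr rfl h2, Finset.sum_const, smul_eq_mul, mul_comm]

lemma aux_key (P : RCSP V S) (F : ℕ) {r : ℕ} (idx : V ⊕ (V × V) → Fin r)
    (ord : V ⊕ (V × V) → ℕ) (hset : P.EmbedSetting F idx ord)
    (Sol : Finset (V × S)) (hSol : P.IsEmbedSolution F idx ord Sol) (ℓ : Fin r) :
    ∑ i ∈ Sol, P.J idx ℓ i.1 ≤ P.N idx ℓ := by
  rcases Sol.eq_empty_or_nonempty with h | ⟨⟨v0, σ0⟩, hmem⟩
  · simp [h]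
  have hS : Nonempty S := ⟨σ0⟩
  have hV : Nonempty V := ⟨v0⟩
  have hF1 : 1 ≤ F := hset.2.1
  have hQ1 : 1 ≤ P.Q F := by
    unfold RCSP.Q
    have h1 : 0 < P.m := P.m_pos
    have h2 : 0 < Fintype.card V := Fintype.card_pos
    have h3 : 0 < Fintype.card S := Fintype.card_pos
    have h4 : 0 < F := hF1
    have : 0 < 3 * F ^ 2 * P.m * Fintype.card V * Fintype.card S := by positivity
    omega
  have hM1 : 1 ≤ P.Mbig F := Nat.one_le_pow _ _ hQ1
  have hordle : ∀ j ∈ P.Dblock idx ℓ, ord j ≤ F := fun j hj =>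
    le_trans ((hset.2.2.2.2 ℓ).mapsTo hj).2 (hset.2.2.2.1 ℓ)
  have hB1M : P.budget1 F idx ord ℓ ≤ P.Mbig F := by
    have hFm : F * P.m ≤ P.Q F := by
      have h3 : 1 ≤ 3 * Fintype.card V * Fintype.card S := by
        have h2 : 0 < Fintype.card V := Fintype.card_pos
        have h3 : 0 < Fintype.card S := Fintype.card_pos
        have : 0 < 3 * Fintype.card V * Fintype.card S := by positivity
        omega
      calc F * P.m = F * P.m * 1 * 1 := by ring
        _ ≤ F * P.m * (3 * Fintype.card V * Fintype.card S) * F := by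
            exact Nat.mul_le_mul (Nat.mul_le_mul_left _ h3) hF1
        _ = P.Q F := by unfold RCSP.Q; ring
    calc P.budget1 F idx ord ℓ = ∑ j ∈ P.Dblock idx ℓ, P.m * P.Q F ^ ord j := rfl
      _ ≤ ∑ j ∈ P.Dblock idx ℓ, P.m * P.Q F ^ F := by
          refine Finset.sum_le_sum fun j hj => ?_
          exact Nat.mul_le_mul_left _ (Nat.pow_le_pow_right hQ1 (hordle j hj))
      _ = (P.Dblock idx ℓ).card * (P.m * P.Q F ^ F) := by
          rw [Finset.sum_const, smul_eq_mul]
      _ ≤ F * (P.m * P.Q F ^ F) := Nat.mul_le_mul_right _ (hset.2.2.2.1 ℓ)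
      _ = F * P.m * P.Q F ^ F := by ring
      _ ≤ P.Q F * P.Q F ^ F := Nat.mul_le_mul_right _ hFm
      _ = P.Q F ^ (F + 1) := by ring
      _ ≤ P.Q F ^ (2 * F) := Nat.pow_le_pow_right hQ1 (by omega)
      _ = P.Mbig F := rfl
  have hB1N : P.budget1 F idx ord ℓ ≤ P.Mbig F * P.N idx ℓ := by
    rcases (P.Dblock idx ℓ).eq_empty_or_nonempty with hD | ⟨j, hj⟩
    · simp [RCSP.budget1, hD]
    · have hN1 : 1 ≤ P.N idx ℓ := by
        have hj' := Finset.mem_filter.mp hj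
        obtain ⟨hjD, hjℓ⟩ := hj'
        have : ∃ v : V, 1 ≤ P.J idx ℓ v := by
          cases j with
          | inl v =>
            refine ⟨v, ?_⟩
            unfold RCSP.J
            rw [if_pos hjℓ]; omega
          | inr e =>
            have heE : e ∈ P.E := by
              rcases Finset.mem_union.mp hjD with h | h
              · simp at h
              · obtain ⟨e', he', heq⟩ := Finset.mem_image.mp h
                cases heq; exact he'
            refine ⟨e.1, ?_⟩
            unfold RCSP.J
            have : e ∈ (P.adj e.1).filter fun e' => idx (Sum.inr e') = ℓ := by
              refine Finset.mem_filter.mpr ⟨?_, hjℓ⟩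
              exact Finset.mem_filter.mpr ⟨heE, Or.inl rfl⟩
            have := Finset.card_pos.mpr ⟨e, this⟩
            omega
        obtain ⟨v, hv⟩ := this
        calc 1 ≤ P.J idx ℓ v := hv
          _ ≤ P.N idx ℓ := Finset.single_le_sum (fun _ _ => Nat.zero_le _) (Finset.mem_univ v)
      calc P.budget1 F idx ord ℓ ≤ P.Mbig F := hB1M
        _ = P.Mbig F * 1 := (mul_one _).symm
        _ ≤ P.Mbig F * P.N idx ℓ := Nat.mul_le_mul_left _ hN1
  have hC := hSol.1 ℓ
  have h2 := hSol.2 ℓ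
  have hlow : P.Mbig F * (∑ i ∈ Sol, P.J idx ℓ i.1) ≤
      (∑ i ∈ Sol, P.cost2 F idx ord ℓ i) + ∑ i ∈ Sol, P.cost1 F idx ord ℓ i := by
    rw [Finset.mul_sum, ← Finset.sum_add_distrib]
    refine Finset.sum_le_sum fun i hi => ?_
    exact le_tsub_add
  have hmain : P.Mbig F * (∑ i ∈ Sol, P.J idx ℓ i.1) ≤ P.Mbig F * P.N idx ℓ := by
    calc P.Mbig F * (∑ i ∈ Sol, P.J idx ℓ i.1)
        ≤ (∑ i ∈ Sol, P.cost2 F idx ord ℓ i) + ∑ i ∈ Sol, P.cost1 F idx ord ℓ i := hlow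
      _ ≤ P.budget2 F idx ord ℓ + P.budget1 F idx ord ℓ := add_le_add h2 hC
      _ = P.Mbig F * P.N idx ℓ := by
          unfold RCSP.budget2
          exact tsub_add_cancel_of_le hB1N
  exact Nat.le_of_mul_le_mul_left hmain (by omega)

end AuxEmbed

/-- In the setting of the dimension embedding reduction, let `Sol` be a
solution of `I(Π,F)` with profit `p(Sol) ≥ |V(G)| + 2·|E(G)| − q` for some `q ∈ ℕ`, and
let `T` be the set of tight indices.  Then the number of non-tight indices satisfies
`|[r] \ T| ≤ q`. -/
theorem embed_nontight_le
    {V S : Type} [Fintype V] [DecidableEq V] [Fintype S] [DecidableEq S]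
    (P : RCSP V S) (F : ℕ) {r : ℕ} (idx : V ⊕ (V × V) → Fin r)
    (ord : V ⊕ (V × V) → ℕ) (hset : P.EmbedSetting F idx ord)
    (Sol : Finset (V × S)) (hSol : P.IsEmbedSolution F idx ord Sol)
    (q : ℕ) (hprofit : Fintype.card V + 2 * P.E.card ≤ P.profit idx Sol + q) :
    (Finset.univ.filter fun ℓ : Fin r =>
        ¬ (∑ i ∈ Sol, P.J idx ℓ i.1 = P.N idx ℓ)).card ≤ q := by
  classical
  have hle : ∀ ℓ : Fin r, ∑ i ∈ Sol, P.J idx ℓ i.1 ≤ P.N idx ℓ :=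
    aux_key P F idx ord hset Sol hSol
  set bad := Finset.univ.filter fun ℓ : Fin r =>
      ¬ (∑ i ∈ Sol, P.J idx ℓ i.1 = P.N idx ℓ) with hbad
  have h1 : bad.card ≤ ∑ ℓ ∈ bad, (P.N idx ℓ - ∑ i ∈ Sol, P.J idx ℓ i.1) := by
    rw [Finset.card_eq_sum_ones]
    refine Finset.sum_le_sum fun ℓ hℓ => ?_
    have hne := (Finset.mem_filter.mp hℓ).2
    have := hle ℓ
    omega
  have h2 : ∑ ℓ ∈ bad, (P.N idx ℓ - ∑ i ∈ Sol, P.J idx ℓ i.1) ≤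
      ∑ ℓ : Fin r, (P.N idx ℓ - ∑ i ∈ Sol, P.J idx ℓ i.1) :=
    Finset.sum_le_sum_of_subset (Finset.filter_subset _ _)
  have h3 : ∑ ℓ : Fin r, (P.N idx ℓ - ∑ i ∈ Sol, P.J idx ℓ i.1) =
      (∑ ℓ : Fin r, P.N idx ℓ) - ∑ ℓ : Fin r, ∑ i ∈ Sol, P.J idx ℓ i.1 := by
    refine eq_tsub_of_add_eq ?_
    rw [← Finset.sum_add_distrib]
    exact Finset.sum_congr rfl fun ℓ _ => tsub_add_cancel_of_le (hle ℓ)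
  have hprof : P.profit idx Sol = ∑ ℓ : Fin r, ∑ i ∈ Sol, P.J idx ℓ i.1 := by
    rw [RCSP.profit, Finset.sum_comm]
  have hsum := aux_sumN P idx
  have hps : ∑ ℓ : Fin r, ∑ i ∈ Sol, P.J idx ℓ i.1 ≤ ∑ ℓ : Fin r, P.N idx ℓ :=
    Finset.sum_le_sum fun ℓ _ => hle ℓ
  omega
end

section
/- Every solution of a 2-unbounded d-dimensional knapsack instance has at most d items, i.e., if S ⊆ I satisfies Σ_{i∈S} c(i)_j ≤ B_j for all j ∈ [d], then |S| ≤ d. -/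
/-- Every solution of a 2-unbounded `d`-dimensional knapsack instance
has at most `d` items: if for every item `i` there is a coordinate `j` with
`c(i)_j > B_j / 2` (equivalently `2·c(i)_j > B_j`), then any `S` with
`Σ_{i ∈ S} c(i)_j ≤ B_j` for all `j` satisfies `|S| ≤ d`. -/
theorem twoUnbounded_solution_card_le
    {I : Type} [Fintype I] [DecidableEq I] (d : ℕ)
    (p : I → ℕ) (c : I → Fin d → ℕ) (B : Fin d → ℕ)
    (hunb : ∀ i : I, ∃ j : Fin d, B j < 2 * c i j)
    (S : Finset I) (hS : ∀ j : Fin d, ∑ i ∈ S, c i j ≤ B j) :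
    S.card ≤ d := by
  choose f hf using hunb
  have : S.card ≤ (Finset.univ : Finset (Fin d)).card := by
    apply Finset.card_le_card_of_injOn f (fun _ _ => Finset.mem_univ _)
    intro a ha b hb hab
    by_contra hne
    have hsum : c a (f a) + c b (f a) ≤ B (f a) := by
      calc c a (f a) + c b (f a)
          = ∑ i ∈ {a, b}, c i (f a) := by
            rw [Finset.sum_pair hne]
        _ ≤ ∑ i ∈ S, c i (f a) := by
            apply Finset.sum_le_sum_of_subset
            intro x hx
            rcases Finset.mem_insert.mp hx with h | h
            · exact h ▸ ha
            · exact (Finset.mem_singleton.mp h) ▸ hb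
        _ ≤ B (f a) := hS _
    have h1 := hf a
    have h2 := hf b
    rw [← hab] at h2
    omega
  simpa using this
end

section
/- Let (I,p,c,B) be a 2-unbounded d-dimensional knapsack instance (d ≥ 1) in which every item satisfies c(i)_j ≤ B_j for all j, let S* = {i_1, …, i_m} be a solution whose elements are sorted so that c(i_1)_j ≥ c(i_2)_j ≥ … ≥ c(i_m)_j for a fixed coordinate j ∈ [d], and let S ⊆ S*. If i_1 ∉ S or i_2 ∉ S, then Σ_{i∈S} Ϝ(c(i))_j ≤ B_j. -/
/-- `ϖ^down(x) = γ^⌊log_γ x⌋` for `x > 0`, and `ϖ^down(0) = 0`. -/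
noncomputable def wdown (γ : ℝ) (x : ℕ) : ℝ :=
  if x = 0 then 0 else γ ^ ⌊Real.log x / Real.log γ⌋

/-- `ϖ^up(x) = γ^⌈log_γ x⌉` for `x > 0`, and `ϖ^up(0) = 0`. -/
noncomputable def wup (γ : ℝ) (x : ℕ) : ℝ :=
  if x = 0 then 0 else γ ^ ⌈Real.log x / Real.log γ⌉

/-- The discretization in coordinate `j` with budget `Bj`:
`Ϝ(x)_j = min{ϖ^up(x_j), B_j − ϖ^down(B_j − x_j)}`. -/
noncomputable def disc (γ : ℝ) (Bj x : ℕ) : ℝ :=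
  min (wup γ x) ((Bj : ℝ) - wdown γ (Bj - x))

lemma wdown_nonneg {γ : ℝ} (hγ : 0 < γ) (x : ℕ) : 0 ≤ wdown γ x := by
  unfold wdown
  split
  · exact le_refl 0
  · positivity

lemma wup_le_gamma_mul {γ : ℝ} (hγ : 1 < γ) (x : ℕ) : wup γ x ≤ γ * x := by
  unfold wup
  rcases eq_or_ne x 0 with h | h
  · simp [h]
  · have hγ0 : (0:ℝ) < γ := lt_trans one_pos hγ
    have hx : (0:ℝ) < x := by
      have : 0 < x := Nat.pos_of_ne_zero h
      exact_mod_cast this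
    simp only [h, if_neg, ite_false]
    have hlogb : Real.log x / Real.log γ = Real.logb γ x := rfl
    rw [hlogb, ← Real.rpow_intCast γ ⌈Real.logb γ x⌉]
    calc γ ^ ((⌈Real.logb γ x⌉ : ℤ) : ℝ)
        ≤ γ ^ (Real.logb γ x + 1) := by
          apply Real.rpow_le_rpow_of_exponent_le hγ.le
          exact_mod_cast (Int.ceil_lt_add_one _).le
      _ = γ ^ Real.logb γ x * γ := Real.rpow_add_one (ne_of_gt hγ0) _
      _ = (x : ℝ) * γ := by rw [Real.rpow_logb hγ0 hγ.ne' hx]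
      _ = γ * x := mul_comm _ _

lemma div_le_wdown {γ : ℝ} (hγ : 1 < γ) (x : ℕ) : (x : ℝ) / γ ≤ wdown γ x := by
  unfold wdown
  rcases eq_or_ne x 0 with h | h
  · simp [h]
  · have hγ0 : (0:ℝ) < γ := lt_trans one_pos hγ
    have hx : (0:ℝ) < x := by
      have : 0 < x := Nat.pos_of_ne_zero h
      exact_mod_cast this
    simp only [h, if_neg, ite_false]
    have hlogb : Real.log x / Real.log γ = Real.logb γ x := rfl
    rw [hlogb, ← Real.rpow_intCast γ ⌊Real.logb γ x⌋]
    calc (x : ℝ) / γ = γ ^ Real.logb γ x / γ := by rw [Real.rpow_logb hγ0 hγ.ne' hx]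
      _ = γ ^ (Real.logb γ x - 1) := (Real.rpow_sub_one (ne_of_gt hγ0) _).symm
      _ ≤ γ ^ ((⌊Real.logb γ x⌋ : ℤ) : ℝ) := by
          apply Real.rpow_le_rpow_of_exponent_le hγ.le
          exact_mod_cast (Int.sub_one_lt_floor _).le

lemma aux_arith (D T ci : ℝ) (hD : 3 ≤ D) (hT : 0 ≤ T) (hci : 1 ≤ ci)
    (hT2 : T ≤ (D - 2) * ci) : (1 + 0.1 / D) * T * (1 + 0.1 / D) ≤ T + ci := by
  have hD0 : (0:ℝ) < D := by linarith
  set u : ℝ := 0.1 / D with hu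
  have hu0 : (0:ℝ) < u := by positivity
  have huD : u * D = 0.1 := by rw [hu]; field_simp
  have hu30 : u ≤ 0.1 / 3 := by
    rw [hu]; exact div_le_div_of_nonneg_left (by norm_num) (by norm_num) hD
  have h1 : u * T ≤ u * ((D - 2) * ci) := mul_le_mul_of_nonneg_left hT2 hu0.le
  have h2 : u * D * ci = 0.1 * ci := by rw [huD]
  have h3 : 0 ≤ u * ci := mul_nonneg hu0.le (by linarith)
  have h4 : u * T ≤ 0.1 * ci := by nlinarith
  have h5 : u * (u * T) ≤ (0.1/3) * (0.1 * ci) := by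
    have hA : 0 ≤ u * T := mul_nonneg hu0.le hT
    calc u * (u * T) ≤ (0.1/3) * (u * T) := mul_le_mul_of_nonneg_right hu30 hA
      _ ≤ (0.1/3) * (0.1 * ci) := by linarith
  nlinarith

/-- Let `(I,p,c,B)` be a 2-unbounded `d`-dimensional knapsack instance
(`d ≥ 1`) with all item costs within the budget, let `S* = {i_1,…,i_m}` (`m ≥ 2`,
given by an injective enumeration `e : Fin m → I`) be a solution sorted descendingly by
the cost in a fixed coordinate `j`, and let `S ⊆ S*`.  If `i_1 ∉ S` or `i_2 ∉ S`, then
`Σ_{i ∈ S} Ϝ(c(i))_j ≤ B_j`, where `Ϝ` is the discretization with `γ = 1 + 0.1/d`. -/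
theorem disc_sum_le_of_missing_top_two
    {I : Type} [Fintype I] [DecidableEq I] (d : ℕ) (hd : 1 ≤ d)
    (p : I → ℕ) (c : I → Fin d → ℕ) (B : Fin d → ℕ)
    (hunb : ∀ i : I, ∃ j : Fin d, B j < 2 * c i j)
    (hle : ∀ (i : I) (j : Fin d), c i j ≤ B j)
    (m : ℕ) (hm : 2 ≤ m) (e : Fin m → I) (he : Function.Injective e)
    (hfeas : ∀ j' : Fin d, ∑ i ∈ Finset.univ.image e, c i j' ≤ B j')
    (j : Fin d)
    (hsorted : ∀ a b : Fin m, a ≤ b → c (e b) j ≤ c (e a) j)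
    (S : Finset I) (hsub : S ⊆ Finset.univ.image e)
    (hmiss : e ⟨0, by omega⟩ ∉ S ∨ e ⟨1, by omega⟩ ∉ S) :
    ∑ i ∈ S, disc (1 + 0.1 / d) (B j) (c i j) ≤ (B j : ℝ) := by
  classical
  set γ : ℝ := 1 + 0.1 / d with hγdef
  have hd1 : (1:ℝ) ≤ (d:ℝ) := by exact_mod_cast hd
  have hγ : 1 < γ := by
    have h1 : (0:ℝ) < 0.1 / d := by positivity
    rw [hγdef]; linarith
  have hγ0 : (0:ℝ) < γ := lt_trans one_pos hγ
  -- m ≤ d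
  have hmd : m ≤ d := by
    let f : Fin m → Fin d := fun k => (hunb (e k)).choose
    have hf : ∀ k, B (f k) < 2 * c (e k) (f k) := fun k => (hunb (e k)).choose_spec
    have hinj : Function.Injective f := by
      intro k k' hkk'
      by_contra hne
      have hene : e k ≠ e k' := fun h => hne (he h)
      have hsub2 : ({e k, e k'} : Finset I) ⊆ Finset.univ.image e := by
        intro i hi
        simp only [Finset.mem_insert, Finset.mem_singleton] at hi
        rcases hi with h | h <;> subst h <;>
          exact Finset.mem_image_of_mem e (Finset.mem_univ _)
      have hsum : c (e k) (f k) + c (e k') (f k) ≤ B (f k) := by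
        calc c (e k) (f k) + c (e k') (f k)
            = ∑ i ∈ ({e k, e k'} : Finset I), c i (f k) := (Finset.sum_pair (f := fun i => c i (f k)) hene).symm
          _ ≤ ∑ i ∈ Finset.univ.image e, c i (f k) :=
              Finset.sum_le_sum_of_subset hsub2
          _ ≤ B (f k) := hfeas (f k)
      have h1 := hf k
      have h2 := hf k'
      rw [← hkk'] at h2
      omega
    have := Fintype.card_le_of_injective f hinj
    simpa using this
  rcases Finset.eq_empty_or_nonempty S with rfl | hS
  · simp
  obtain ⟨istar, s, histar_mem, histar_not, hs_mem, hbound⟩ :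
      ∃ istar s : I, istar ∈ Finset.univ.image e ∧ istar ∉ S ∧ s ∈ S ∧
        ∀ i ∈ S, i ≠ s → c i j ≤ c istar j := by
    by_cases h0 : e ⟨0, by omega⟩ ∈ S
    · have h1 : e ⟨1, by omega⟩ ∉ S := hmiss.resolve_left (fun h => h h0)
      refine ⟨e ⟨1, by omega⟩, e ⟨0, by omega⟩,
        Finset.mem_image_of_mem e (Finset.mem_univ _), h1, h0, ?_⟩
      intro i hi hne
      obtain ⟨k, _, hk⟩ := Finset.mem_image.mp (hsub hi)
      subst hk
      have hk0 : k ≠ ⟨0, by omega⟩ := fun h => hne (by rw [h])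
      have hk1 : (⟨1, by omega⟩ : Fin m) ≤ k := by
        have : k.val ≠ 0 := fun h => hk0 (Fin.ext h)
        exact Fin.mk_le_mk.mpr (by omega)
      exact hsorted _ _ hk1
    · obtain ⟨s, hs⟩ := hS
      refine ⟨e ⟨0, by omega⟩, s,
        Finset.mem_image_of_mem e (Finset.mem_univ _), h0, hs, ?_⟩
      intro i hi _
      obtain ⟨k, _, hk⟩ := Finset.mem_image.mp (hsub hi)
      subst hk
      exact hsorted ⟨0, by omega⟩ k (Fin.mk_le_mk.mpr (Nat.zero_le _))
  have hSsub' : insert istar S ⊆ Finset.univ.image e :=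
    Finset.insert_subset histar_mem hsub
  have hF1 : c istar j + ∑ i ∈ S, c i j ≤ B j := by
    calc c istar j + ∑ i ∈ S, c i j
        = ∑ i ∈ insert istar S, c i j := (Finset.sum_insert (f := fun i => c i j) histar_not).symm
      _ ≤ ∑ i ∈ Finset.univ.image e, c i j := Finset.sum_le_sum_of_subset hSsub'
      _ ≤ B j := hfeas j
  have hScard : S.card ≤ m - 1 := by
    have hsub3 : S ⊆ (Finset.univ.image e).erase istar :=
      Finset.subset_erase.mpr ⟨hsub, histar_not⟩
    have h2 := Finset.card_le_card hsub3
    rw [Finset.card_erase_of_mem histar_mem,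
      Finset.card_image_of_injective _ he, Finset.card_univ, Fintype.card_fin] at h2
    exact h2
  set T : ℕ := ∑ i ∈ S.erase s, c i j with hT
  have hcard_erase : (S.erase s).card ≤ d - 2 := by
    rw [Finset.card_erase_of_mem hs_mem]
    omega
  have hT2 : T ≤ (d - 2) * c istar j := by
    calc T ≤ ∑ _i ∈ S.erase s, c istar j :=
          Finset.sum_le_sum (fun i hi =>
            hbound i (Finset.mem_of_mem_erase hi) (Finset.ne_of_mem_erase hi))
      _ = (S.erase s).card * c istar j := by rw [Finset.sum_const, smul_eq_mul]
      _ ≤ (d - 2) * c istar j := Nat.mul_le_mul_right _ hcard_erase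
  have hcsT : c s j + T = ∑ i ∈ S, c i j := Finset.add_sum_erase S (fun i => c i j) hs_mem
  have hsplit : ∑ i ∈ S, disc γ (B j) (c i j)
      = disc γ (B j) (c s j) + ∑ i ∈ S.erase s, disc γ (B j) (c i j) :=
    (Finset.add_sum_erase S _ hs_mem).symm
  have htail : ∑ i ∈ S.erase s, disc γ (B j) (c i j) ≤ γ * (T:ℝ) := by
    calc ∑ i ∈ S.erase s, disc γ (B j) (c i j)
        ≤ ∑ i ∈ S.erase s, γ * (c i j : ℝ) :=
          Finset.sum_le_sum (fun i _ =>
            (min_le_left _ _).trans (wup_le_gamma_mul hγ _))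
      _ = γ * (T:ℝ) := by rw [← Finset.mul_sum, hT]; push_cast; ring
  have hhead : disc γ (B j) (c s j) ≤ (B j : ℝ) - wdown γ (B j - c s j) :=
    min_le_right _ _
  have hkey : γ * (T:ℝ) ≤ wdown γ (B j - c s j) := by
    rcases Nat.eq_zero_or_pos T with hT0 | hTpos
    · rw [hT0]
      simpa using wdown_nonneg hγ0 (B j - c s j)
    · have hci : 1 ≤ c istar j := by
        rcases Nat.eq_zero_or_pos (c istar j) with h | h
        · rw [h, Nat.mul_zero] at hT2; omega
        · exact h
      have hd3 : 3 ≤ d := by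
        rcases Nat.lt_or_ge d 3 with h | h
        · exfalso
          have : d - 2 = 0 := by omega
          rw [this, Nat.zero_mul] at hT2; omega
        · exact h
      have hyge : T + c istar j ≤ B j - c s j := by omega
      -- real versions
      have hciR : (1:ℝ) ≤ (c istar j : ℝ) := by exact_mod_cast hci
      have hdR : (3:ℝ) ≤ (d:ℝ) := by exact_mod_cast hd3
      have hTR : (0:ℝ) ≤ (T:ℝ) := Nat.cast_nonneg _
      have hT2R : (T:ℝ) ≤ ((d:ℝ) - 2) * (c istar j : ℝ) := by
        have := hT2
        have hcast : ((d - 2 : ℕ) : ℝ) = (d:ℝ) - 2 := by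
          have : 2 ≤ d := by omega
          push_cast [Nat.cast_sub this]; ring
        calc (T:ℝ) ≤ ((d - 2 : ℕ) * c istar j : ℕ) := by exact_mod_cast hT2
          _ = ((d:ℝ) - 2) * (c istar j : ℝ) := by push_cast [hcast]; ring
      have hygeR : (T:ℝ) + (c istar j : ℝ) ≤ ((B j - c s j : ℕ) : ℝ) := by
        exact_mod_cast hyge
      calc γ * (T:ℝ) ≤ ((B j - c s j : ℕ) : ℝ) / γ := by
            rw [le_div_iff₀ hγ0]
            have hstep : γ * (T:ℝ) * γ ≤ (T:ℝ) + (c istar j : ℝ) := by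
              rw [hγdef]
              exact aux_arith _ _ _ hdR hTR hciR hT2R
            calc γ * (T:ℝ) * γ ≤ (T:ℝ) + (c istar j : ℝ) := hstep
              _ ≤ ((B j - c s j : ℕ) : ℝ) := hygeR
        _ ≤ wdown γ (B j - c s j) := div_le_wdown hγ _
  calc ∑ i ∈ S, disc γ (B j) (c i j)
      = disc γ (B j) (c s j) + ∑ i ∈ S.erase s, disc γ (B j) (c i j) := hsplit
    _ ≤ ((B j : ℝ) - wdown γ (B j - c s j)) + γ * (T:ℝ) := add_le_add hhead htail
    _ ≤ (B j : ℝ) := by linarith [hkey]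
end

section
/- (Soundness of the 3-SAT to R-CSP reduction via connected embeddings.) Let φ = (V,C) be a 3-SAT formula with |C| = m, let G_clause be the graph on vertex set C with an edge between two distinct clauses whenever they share a variable, let H be a finite graph, and let ψ : C → 2^{V(H)} be a connected embedding of G_clause in H with depth Δ(ψ). Set C_x = {c ∈ C : x ∈ ψ(c)} for each x ∈ V(H). If Π(φ,H,(C_x)_x) has a consistent partial assignment of size s, then there exists an assignment s : V → {0,1} satisfying at least m − (|V(H)| − s)·Δ(ψ) clauses of C. -/
/-- A 3-SAT formula over variables `V` with clauses indexed by `C`: clause `c` is the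
disjunction of the literals in `lits c`, where the literal `(v, b)` is satisfied by an
assignment `s` iff `s v = b`.  `Sat lits s c` says that `s` satisfies clause `c`. -/
def Sat {V C : Type} (lits : C → Finset (V × Bool)) (s : V → Bool) (c : C) : Prop :=
  ∃ l ∈ lits c, s l.1 = l.2

instance {V C : Type} (lits : C → Finset (V × Bool)) (s : V → Bool) :
    DecidablePred (Sat lits s) := fun c => by unfold Sat; infer_instance

/-- `var(c)`: the set of variables appearing in clause `c`. -/
def varsOf {V C : Type} [DecidableEq V] (lits : C → Finset (V × Bool)) (c : C) :
    Finset V :=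
  (lits c).image Prod.fst

/-- **Soundness of the 3-SAT to R-CSP reduction via connected embeddings.**
Let `φ = (V,C)` be a 3-SAT formula, `G_clause` the graph on `C` joining two distinct
clauses that share a variable, `H` a finite graph, and `ψ : C → 2^{V(H)}` a connected
embedding of `G_clause` in `H` (each `ψ c` is nonempty with connected induced subgraph,
and the subgraphs of adjacent clauses touch) of depth `Δ(ψ)`.  Set
`C_x = {c : x ∈ ψ c}`.  If `Π(φ,H,(C_x)_x)` has a consistent partial assignment
(assigned set `A`, symbols `g`) of size `|A|`, then some assignment `s : V → {0,1}`
satisfies at least `|C| − (|V(H)| − |A|)·Δ(ψ)` clauses. -/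
theorem sat_to_csp_soundness_embedding
    {V C X : Type} [Fintype V] [DecidableEq V] [Fintype C] [DecidableEq C]
    [Fintype X] [DecidableEq X]
    (lits : C → Finset (V × Bool)) (hlits : ∀ c : C, (lits c).card ≤ 3)
    (H : SimpleGraph X) (ψ : C → Finset X)
    (hne : ∀ c : C, (ψ c).Nonempty)
    (hconn : ∀ c : C, (H.induce (↑(ψ c) : Set X)).Connected)
    (htouch : ∀ c c' : C, c ≠ c' → (varsOf lits c ∩ varsOf lits c').Nonempty →
      ((ψ c ∩ ψ c').Nonempty ∨ ∃ a ∈ ψ c, ∃ b ∈ ψ c', H.Adj a b))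
    (Δ : ℕ)
    (hΔ : Δ = Finset.univ.sup fun x : X => (Finset.univ.filter fun c : C => x ∈ ψ c).card)
    (A : Finset X) (g : X → V → Bool)
    (hsat : ∀ x ∈ A, ∀ c ∈ Finset.univ.filter fun c : C => x ∈ ψ c,
      Sat lits (g x) c)
    (hagree : ∀ x ∈ A, ∀ y ∈ A, H.Adj x y →
      ∀ v ∈ ((Finset.univ.filter fun c : C => x ∈ ψ c).biUnion (varsOf lits) ∩
             (Finset.univ.filter fun c : C => y ∈ ψ c).biUnion (varsOf lits)),
        g x v = g y v) :
    ∃ s : V → Bool,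
      Fintype.card C ≤
        (Finset.univ.filter fun c : C => Sat lits s c).card +
          (Fintype.card X - A.card) * Δ := by
  classical
  -- agreement within a single good clause, along walks in the induced subgraph
  have step : ∀ (c : C), (∀ z ∈ ψ c, z ∈ A) → ∀ v ∈ varsOf lits c,
      ∀ (a b : (↑(ψ c) : Set X)), (H.induce (↑(ψ c) : Set X)).Walk a b →
        g a.1 v = g b.1 v := by
    intro c hc v hv a b w
    induction w with
    | nil => rfl
    | @cons a u b h p ih =>
      have ha : a.1 ∈ A := hc a.1 (Finset.mem_coe.mp a.2)
      have hu : u.1 ∈ A := hc u.1 (Finset.mem_coe.mp u.2)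
      have hadj : H.Adj a.1 u.1 := h
      have hmem : v ∈ ((Finset.univ.filter fun c' : C => a.1 ∈ ψ c').biUnion (varsOf lits) ∩
             (Finset.univ.filter fun c' : C => u.1 ∈ ψ c').biUnion (varsOf lits)) := by
        refine Finset.mem_inter.mpr ⟨?_, ?_⟩
        · exact Finset.mem_biUnion.mpr ⟨c, Finset.mem_filter.mpr
            ⟨Finset.mem_univ c, Finset.mem_coe.mp a.2⟩, hv⟩
        · exact Finset.mem_biUnion.mpr ⟨c, Finset.mem_filter.mpr
            ⟨Finset.mem_univ c, Finset.mem_coe.mp u.2⟩, hv⟩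
      exact (hagree a.1 ha u.1 hu hadj v hmem).trans ih
  have key : ∀ (c : C), (∀ z ∈ ψ c, z ∈ A) → ∀ v ∈ varsOf lits c,
      ∀ x ∈ ψ c, ∀ y ∈ ψ c, g x v = g y v := by
    intro c hc v hv x hx y hy
    obtain ⟨w⟩ := (hconn c).preconnected ⟨x, Finset.mem_coe.mpr hx⟩ ⟨y, Finset.mem_coe.mpr hy⟩
    exact step c hc v hv _ _ w
  -- agreement across two good clauses sharing a variable
  have glob : ∀ c c' : C, (∀ z ∈ ψ c, z ∈ A) → (∀ z ∈ ψ c', z ∈ A) →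
      ∀ v, v ∈ varsOf lits c → v ∈ varsOf lits c' →
      ∀ x ∈ ψ c, ∀ x' ∈ ψ c', g x v = g x' v := by
    intro c c' hc hc' v hv hv' x hx x' hx'
    by_cases hcc : c = c'
    · subst hcc; exact key c hc v hv x hx x' hx'
    · rcases htouch c c' hcc ⟨v, Finset.mem_inter.mpr ⟨hv, hv'⟩⟩ with
        ⟨z, hz⟩ | ⟨a, ha, b, hb, hab⟩
      · have hz1 := (Finset.mem_inter.mp hz).1
        have hz2 := (Finset.mem_inter.mp hz).2
        exact (key c hc v hv x hx z hz1).trans (key c' hc' v hv' z hz2 x' hx')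
      · have hmem : v ∈ ((Finset.univ.filter fun c'' : C => a ∈ ψ c'').biUnion (varsOf lits) ∩
             (Finset.univ.filter fun c'' : C => b ∈ ψ c'').biUnion (varsOf lits)) := by
          refine Finset.mem_inter.mpr ⟨?_, ?_⟩
          · exact Finset.mem_biUnion.mpr ⟨c, Finset.mem_filter.mpr
              ⟨Finset.mem_univ c, ha⟩, hv⟩
          · exact Finset.mem_biUnion.mpr ⟨c', Finset.mem_filter.mpr
              ⟨Finset.mem_univ c', hb⟩, hv'⟩
        have hab' := hagree a (hc a ha) b (hc' b hb) hab v hmem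
        exact (key c hc v hv x hx a ha).trans (hab'.trans (key c' hc' v hv' b hb x' hx'))
  -- the global assignment
  set P : V → Prop := fun v => ∃ p : C × X,
      (∀ z ∈ ψ p.1, z ∈ A) ∧ v ∈ varsOf lits p.1 ∧ p.2 ∈ ψ p.1 with hP
  set s : V → Bool := fun v => if h : P v then g (Classical.choose h).2 v else false with hs
  have hsval : ∀ (c : C), (∀ z ∈ ψ c, z ∈ A) → ∀ v ∈ varsOf lits c, ∀ x ∈ ψ c,
      s v = g x v := by
    intro c hc v hv x hx
    have hPv : P v := ⟨(c, x), hc, hv, hx⟩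
    have := Classical.choose_spec hPv
    obtain ⟨h1, h2, h3⟩ := this
    simp only [hs, dif_pos hPv]
    exact glob _ c h1 hc v h2 hv _ h3 x hx
  -- good clauses are satisfied by s
  have hgoodsat : ∀ c : C, (∀ z ∈ ψ c, z ∈ A) → Sat lits s c := by
    intro c hc
    obtain ⟨x, hx⟩ := hne c
    obtain ⟨l, hl, hlv⟩ := hsat x (hc x hx) c (Finset.mem_filter.mpr ⟨Finset.mem_univ c, hx⟩)
    refine ⟨l, hl, ?_⟩
    have hv : l.1 ∈ varsOf lits c := Finset.mem_image.mpr ⟨l, hl, rfl⟩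
    rw [hsval c hc l.1 hv x hx]; exact hlv
  -- counting
  set good : Finset C := Finset.univ.filter fun c : C => ∀ z ∈ ψ c, z ∈ A with hgood
  set bad : Finset C := Finset.univ.filter fun c : C => ¬ ∀ z ∈ ψ c, z ∈ A with hbad
  have hsplit : good.card + bad.card = Fintype.card C := by
    rw [hgood, hbad]
    rw [Finset.card_filter_add_card_filter_not]
    exact Finset.card_univ
  have hgoodle : good.card ≤ (Finset.univ.filter fun c : C => Sat lits s c).card := by
    apply Finset.card_le_card
    intro c hcg
    exact Finset.mem_filter.mpr ⟨Finset.mem_univ c,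
      hgoodsat c (Finset.mem_filter.mp hcg).2⟩
  have hbadsub : bad ⊆ Aᶜ.biUnion (fun x => Finset.univ.filter fun c : C => x ∈ ψ c) := by
    intro c hcb
    have h2 := (Finset.mem_filter.mp hcb).2
    push_neg at h2
    obtain ⟨z, hz1, hz2⟩ := h2
    exact Finset.mem_biUnion.mpr ⟨z, Finset.mem_compl.mpr hz2,
      Finset.mem_filter.mpr ⟨Finset.mem_univ c, hz1⟩⟩
  have hbadle : bad.card ≤ (Fintype.card X - A.card) * Δ := by
    calc bad.card ≤ (Aᶜ.biUnion (fun x => Finset.univ.filter fun c : C => x ∈ ψ c)).card :=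
          Finset.card_le_card hbadsub
      _ ≤ ∑ x ∈ Aᶜ, (Finset.univ.filter fun c : C => x ∈ ψ c).card :=
          Finset.card_biUnion_le
      _ ≤ Aᶜ.card * Δ := by
          rw [← smul_eq_mul]
          apply Finset.sum_le_card_nsmul
          intro x _
          rw [hΔ]
          exact Finset.le_sup (f := fun x : X => (Finset.univ.filter fun c : C => x ∈ ψ c).card) (Finset.mem_univ x)
      _ = (Fintype.card X - A.card) * Δ := by rw [Finset.card_compl]
  exact ⟨s, by omega⟩
end

section
/- (Soundness of the 3-SAT to R-CSP reduction via dispersers.) Let φ = (V,C) be a 3-SAT formula with |C| = m, let ε ∈ (0,1) and r, k ∈ ℕ, let H be the complete graph on k vertices, and let (C_x)_{x∈V(H)} be subsets of C such that for any r distinct vertices x_1, …, x_r of H one has |C_{x_1} ∪ … ∪ C_{x_r}| ≥ (1−ε)·m. If Π(φ,H,(C_x)_x) has a consistent partial assignment of size at least r, then there exists an assignment s : V → {0,1} satisfying at least (1−ε)·m clauses of C. -/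
/-- **Soundness of the 3-SAT to R-CSP reduction via dispersers.**
Let `φ = (V,C)` be a 3-SAT formula with `|C| = m`, `ε ∈ (0,1)`, `r, k ∈ ℕ`, `H` the
complete graph on `k` vertices, and `(C_x)_x` subsets of `C` such that any `r` distinct
vertices satisfy `|C_{x_1} ∪ … ∪ C_{x_r}| ≥ (1−ε)·m`.  If `Π(φ,H,(C_x)_x)` has a
consistent partial assignment of size at least `r` (assigned set `A`, symbols `g`; in the
complete graph every pair of distinct assigned vertices must agree), then some assignment
`s : V → {0,1}` satisfies at least `(1−ε)·m` clauses. -/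
theorem sat_to_csp_soundness_disperser
    {V C : Type} [Fintype V] [DecidableEq V] [Fintype C] [DecidableEq C]
    (lits : C → Finset (V × Bool)) (hlits : ∀ c : C, (lits c).card ≤ 3)
    (ε : ℝ) (hε₀ : 0 < ε) (hε₁ : ε < 1) (r k : ℕ)
    (Cx : Fin k → Finset C)
    (hdisp : ∀ T : Finset (Fin k), T.card = r →
      (1 - ε) * (Fintype.card C : ℝ) ≤ ((T.biUnion Cx).card : ℝ))
    (A : Finset (Fin k)) (hA : r ≤ A.card) (g : Fin k → V → Bool)
    (hsat : ∀ x ∈ A, ∀ c ∈ Cx x, Sat lits (g x) c)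
    (hagree : ∀ x ∈ A, ∀ y ∈ A, x ≠ y →
      ∀ v ∈ (Cx x).biUnion (varsOf lits) ∩ (Cx y).biUnion (varsOf lits),
        g x v = g y v) :
    ∃ s : V → Bool,
      (1 - ε) * (Fintype.card C : ℝ) ≤
        ((Finset.univ.filter fun c : C => Sat lits s c).card : ℝ) := by
  classical
  set P : V → Fin k → Prop := fun v x => x ∈ A ∧ v ∈ (Cx x).biUnion (varsOf lits) with hP
  set s : V → Bool := fun v => if h : ∃ x, P v x then g h.choose v else false with hs
  have key : ∀ x ∈ A, ∀ v ∈ (Cx x).biUnion (varsOf lits), s v = g x v := by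
    intro x hx v hv
    have h : ∃ y, P v y := ⟨x, hx, hv⟩
    simp only [hs, dif_pos h]
    obtain ⟨hy, hv'⟩ := h.choose_spec
    by_cases hxy : h.choose = x
    · rw [hxy]
    · exact hagree _ hy _ hx hxy v (Finset.mem_inter.mpr ⟨hv', hv⟩)
  obtain ⟨T, hTA, hTcard⟩ := Finset.exists_subset_card_eq hA
  refine ⟨s, le_trans (hdisp T hTcard) ?_⟩
  have hsub : T.biUnion Cx ⊆ Finset.univ.filter fun c : C => Sat lits s c := by
    intro c hc
    obtain ⟨x, hxT, hcx⟩ := Finset.mem_biUnion.mp hc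
    have hxA := hTA hxT
    obtain ⟨l, hl, hgl⟩ := hsat x hxA c hcx
    refine Finset.mem_filter.mpr ⟨Finset.mem_univ _, ⟨l, hl, ?_⟩⟩
    rw [key x hxA l.1 (Finset.mem_biUnion.mpr ⟨c, hcx,
      Finset.mem_image.mpr ⟨l, hl, rfl⟩⟩)]
    exact hgl
  exact_mod_cast Finset.card_le_card hsub
end
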